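/- arXiv:2403.19659 — 18 statements merged into one kernel-verified Lean document; each statement's English description precedes it below -/
import Mathlib

section
/- Let N be a proper submodule of M. (i) If for every m ∈ M \ N the ideal (N :_R m) is a weakly 1-absorbing prime ideal of R, then N is a weakly classical 1-absorbing prime submodule of M. (ii) Conversely, if N is a weakly classical 1-absorbing prime submodule of M and m ∈ M \ N is an element with Ann_R(m) = 0, then (N :_R m) is a weakly 1-absorbing prime ideal of R. -/
/-- A proper submodule `N` of `M` is weakly classical 1-absorbing prime if whenever
`abcm ∈ N` and `abcm ≠ 0` for nonunits `a, b, c ∈ R` and `m ∈ M`, then `abm ∈ N` or `cm ∈ N`. -/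
def IsWeaklyClassical1AbsorbingPrime {R : Type*} [CommRing R] {M : Type*} [AddCommGroup M]
    [Module R M] (N : Submodule R M) : Prop :=
  N ≠ ⊤ ∧ ∀ a b c : R, ∀ m : M, ¬ IsUnit a → ¬ IsUnit b → ¬ IsUnit c →
    (a * b * c) • m ∈ N → (a * b * c) • m ≠ 0 → ((a * b) • m ∈ N ∨ c • m ∈ N)

/-- A proper ideal `I` of `R` is weakly 1-absorbing prime if whenever `abc ∈ I` and
`abc ≠ 0` for nonunits `a, b, c ∈ R`, then `ab ∈ I` or `c ∈ I`. -/
def IsWeakly1AbsorbingPrimeIdeal {R : Type*} [CommRing R] (I : Ideal R) : Prop :=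
  I ≠ ⊤ ∧ ∀ a b c : R, ¬ IsUnit a → ¬ IsUnit b → ¬ IsUnit c →
    a * b * c ∈ I → a * b * c ≠ 0 → (a * b ∈ I ∨ c ∈ I)

section

variable {R : Type*} [CommRing R] {M : Type*} [AddCommGroup M] [Module R M]

theorem mem_comap_toSpanSingleton {N : Submodule R M} {m : M} {r : R} :
    r ∈ N.comap (LinearMap.toSpanSingleton R M m) ↔ r • m ∈ N :=
  Iff.rfl

theorem IsWeaklyClassical1AbsorbingPrime.of_comap_toSpanSingleton {N : Submodule R M}
    (hN : N ≠ ⊤) (h : ∀ m : M, m ∉ N →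
      IsWeakly1AbsorbingPrimeIdeal (N.comap (LinearMap.toSpanSingleton R M m))) :
    IsWeaklyClassical1AbsorbingPrime N := by
  refine ⟨hN, fun a b c m ha hb hc habc hne => ?_⟩
  by_cases hm : m ∈ N
  · exact Or.inr (N.smul_mem c hm)
  · have habc_ne : a * b * c ≠ 0 := fun h0 => hne (by rw [h0, zero_smul])
    exact (h m hm).2 a b c ha hb hc habc habc_ne

theorem IsWeaklyClassical1AbsorbingPrime.comap_toSpanSingleton {N : Submodule R M}
    (hN : IsWeaklyClassical1AbsorbingPrime N) {m : M} (hm : m ∉ N)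
    (hm_ann : ∀ x : R, x • m = 0 → x = 0) :
    IsWeakly1AbsorbingPrimeIdeal (N.comap (LinearMap.toSpanSingleton R M m)) := by
  refine ⟨fun htop => hm ?_, fun a b c ha hb hc habc habc_ne => ?_⟩
  · simpa using mem_comap_toSpanSingleton.mp (htop ▸ Submodule.mem_top : (1 : R) ∈ _)
  · exact hN.2 a b c m ha hb hc habc fun h => habc_ne (hm_ann _ h)

end

theorem stmt_0_general {R : Type*} [CommRing R] {M : Type*} [AddCommGroup M]
    [Module R M] (N : Submodule R M) (hN : N ≠ ⊤) :
    ((∀ m : M, m ∉ N →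
        IsWeakly1AbsorbingPrimeIdeal (Submodule.comap (LinearMap.toSpanSingleton R M m) N)) →
      IsWeaklyClassical1AbsorbingPrime N) ∧
    (IsWeaklyClassical1AbsorbingPrime N →
      ∀ m : M, m ∉ N → (∀ x : R, x • m = 0 → x = 0) →
        IsWeakly1AbsorbingPrimeIdeal (Submodule.comap (LinearMap.toSpanSingleton R M m) N)) :=
  ⟨IsWeaklyClassical1AbsorbingPrime.of_comap_toSpanSingleton hN,
    fun h _ hm hm_ann => h.comap_toSpanSingleton hm hm_ann⟩

/-- (i) If `(N :_R m)` is a weakly 1-absorbing prime ideal for every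
`m ∈ M \ N`, then `N` is weakly classical 1-absorbing prime. (ii) Conversely, if `N` is
weakly classical 1-absorbing prime and `m ∈ M \ N` has zero annihilator, then `(N :_R m)`
is a weakly 1-absorbing prime ideal. -/
theorem stmt_0 {R : Type*} [CommRing R] [Nontrivial R] {M : Type*} [AddCommGroup M]
    [Module R M] [Nontrivial M] (N : Submodule R M) (hN : N ≠ ⊤) :
    ((∀ m : M, m ∉ N →
        IsWeakly1AbsorbingPrimeIdeal (Submodule.comap (LinearMap.toSpanSingleton R M m) N)) →
      IsWeaklyClassical1AbsorbingPrime N) ∧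
    (IsWeaklyClassical1AbsorbingPrime N →
      ∀ m : M, m ∉ N → (∀ x : R, x • m = 0 → x = 0) →
        IsWeakly1AbsorbingPrimeIdeal (Submodule.comap (LinearMap.toSpanSingleton R M m) N)) :=
  stmt_0_general N hN
end

section
/- Let I be a proper ideal of R. Then I, regarded as a submodule of the R-module R, is a weakly classical 1-absorbing prime submodule of R if and only if I is a weakly 1-absorbing prime ideal of R. -/
section

variable {R : Type*} [CommRing R] {I : Ideal R}

theorem IsWeaklyClassical1AbsorbingPrime.isWeakly1AbsorbingPrimeIdeal
    (h : IsWeaklyClassical1AbsorbingPrime (I : Submodule R R)) :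
    IsWeakly1AbsorbingPrimeIdeal I := by
  obtain ⟨hI, habsorb⟩ := h
  refine ⟨hI, fun a b c ha hb hc habc hne => ?_⟩
  simpa using habsorb a b c 1 ha hb hc (by simpa using habc) (by simpa using hne)

/-- The element `m` is absorbed into the third factor: `c * m` is a nonunit because `c` is. -/
theorem IsWeakly1AbsorbingPrimeIdeal.isWeaklyClassical1AbsorbingPrime
    (h : IsWeakly1AbsorbingPrimeIdeal I) :
    IsWeaklyClassical1AbsorbingPrime (I : Submodule R R) := by
  obtain ⟨hI, habsorb⟩ := h
  refine ⟨hI, fun a b c m ha hb hc habc hne => ?_⟩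
  have hcm : ¬ IsUnit (c * m) := fun hu => hc (isUnit_of_mul_isUnit_left hu)
  have hassoc : (a * b * c) • m = a * b * (c * m) := by rw [smul_eq_mul]; ring
  rw [hassoc] at habc hne
  rcases habsorb a b (c * m) ha hb hcm habc hne with hab | hc
  · exact Or.inl (I.mul_mem_right m hab)
  · exact Or.inr hc

end

theorem stmt_2_general {R : Type*} [CommRing R] (I : Ideal R) :
    IsWeaklyClassical1AbsorbingPrime (I : Submodule R R) ↔ IsWeakly1AbsorbingPrimeIdeal I :=
  ⟨IsWeaklyClassical1AbsorbingPrime.isWeakly1AbsorbingPrimeIdeal,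
    IsWeakly1AbsorbingPrimeIdeal.isWeaklyClassical1AbsorbingPrime⟩

/-- A proper ideal `I` of `R` is a weakly classical 1-absorbing prime
submodule of the `R`-module `R` iff `I` is a weakly 1-absorbing prime ideal of `R`. -/
theorem stmt_2 {R : Type*} [CommRing R] [Nontrivial R] (I : Ideal R) (hI : I ≠ ⊤) :
    IsWeaklyClassical1AbsorbingPrime (I : Submodule R R) ↔ IsWeakly1AbsorbingPrimeIdeal I :=
  stmt_2_general I
end

section
/- Let M and M' be R-modules and f : M → M' an injective R-module homomorphism. If N' is a weakly classical 1-absorbing prime submodule of M' with f⁻¹(N') ≠ M, then f⁻¹(N') is a weakly classical 1-absorbing prime submodule of M. -/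
theorem IsWeaklyClassical1AbsorbingPrime.comap {R : Type*} [CommRing R] {M M' : Type*}
    [AddCommGroup M] [Module R M] [AddCommGroup M'] [Module R M'] {N' : Submodule R M'}
    (hN' : IsWeaklyClassical1AbsorbingPrime N') {f : M →ₗ[R] M'} (hf : Function.Injective f)
    (hproper : Submodule.comap f N' ≠ ⊤) :
    IsWeaklyClassical1AbsorbingPrime (Submodule.comap f N') := by
  refine ⟨hproper, fun a b c m ha hb hc hmem hne => ?_⟩
  simp only [Submodule.mem_comap, map_smul] at hmem ⊢
  have hne' : (a * b * c) • f m ≠ 0 := by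
    rwa [← map_smul, ne_eq, map_eq_zero_iff f hf]
  exact hN'.2 a b c (f m) ha hb hc hmem hne'

theorem stmt_3_general {R : Type*} [CommRing R] {M M' : Type*} [AddCommGroup M]
    [Module R M] [AddCommGroup M'] [Module R M']
    (f : M →ₗ[R] M') (hf : Function.Injective f) (N' : Submodule R M')
    (hN' : IsWeaklyClassical1AbsorbingPrime N') (hproper : Submodule.comap f N' ≠ ⊤) :
    IsWeaklyClassical1AbsorbingPrime (Submodule.comap f N') :=
  hN'.comap hf hproper

/-- If `f : M → M'` is an injective `R`-homomorphism and `N'` is a weakly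
classical 1-absorbing prime submodule of `M'` with `f⁻¹(N') ≠ M`, then `f⁻¹(N')` is a
weakly classical 1-absorbing prime submodule of `M`. -/
theorem stmt_3 {R : Type*} [CommRing R] [Nontrivial R] {M M' : Type*} [AddCommGroup M]
    [Module R M] [Nontrivial M] [AddCommGroup M'] [Module R M'] [Nontrivial M']
    (f : M →ₗ[R] M') (hf : Function.Injective f) (N' : Submodule R M')
    (hN' : IsWeaklyClassical1AbsorbingPrime N') (hproper : Submodule.comap f N' ≠ ⊤) :
    IsWeaklyClassical1AbsorbingPrime (Submodule.comap f N') :=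
  stmt_3_general f hf N' hN' hproper
end

section
/- Let M and M' be R-modules and f : M → M' a surjective R-module homomorphism. If N is a weakly classical 1-absorbing prime submodule of M with Ker(f) ⊆ N, then f(N) is a weakly classical 1-absorbing prime submodule of M'. -/
section

variable {R M M' : Type*} [CommRing R] [AddCommGroup M] [Module R M] [AddCommGroup M']
  [Module R M']

theorem Submodule.apply_mem_map_iff_of_ker_le {f : M →ₗ[R] M'} {N : Submodule R M}
    (hker : LinearMap.ker f ≤ N) {x : M} : f x ∈ N.map f ↔ x ∈ N := by
  rw [← Submodule.mem_comap, Submodule.comap_map_eq_self hker]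

theorem IsWeaklyClassical1AbsorbingPrime.map_of_surjective {f : M →ₗ[R] M'}
    (hf : Function.Surjective f) {N : Submodule R M} (hN : IsWeaklyClassical1AbsorbingPrime N)
    (hker : LinearMap.ker f ≤ N) : IsWeaklyClassical1AbsorbingPrime (N.map f) := by
  refine ⟨fun htop => hN.1 ?_, fun a b c m' ha hb hc hmem hne => ?_⟩
  · rw [← Submodule.comap_map_eq_self hker, htop, Submodule.comap_top]
  obtain ⟨m, rfl⟩ := hf m'
  simp only [← map_smul, Submodule.apply_mem_map_iff_of_ker_le hker] at hmem hne ⊢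
  exact hN.2 a b c m ha hb hc hmem (ne_of_apply_ne f (by rwa [map_zero]))

end

theorem stmt_4_general {R : Type*} [CommRing R] {M M' : Type*} [AddCommGroup M]
    [Module R M] [AddCommGroup M'] [Module R M']
    (f : M →ₗ[R] M') (hf : Function.Surjective f) (N : Submodule R M)
    (hN : IsWeaklyClassical1AbsorbingPrime N) (hker : LinearMap.ker f ≤ N) :
    IsWeaklyClassical1AbsorbingPrime (Submodule.map f N) :=
  hN.map_of_surjective hf hker

/-- If `f : M → M'` is a surjective `R`-homomorphism and `N` is a weakly
classical 1-absorbing prime submodule of `M` containing `Ker f`, then `f(N)` is a weakly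
classical 1-absorbing prime submodule of `M'`. -/
theorem stmt_4 {R : Type*} [CommRing R] [Nontrivial R] {M M' : Type*} [AddCommGroup M]
    [Module R M] [Nontrivial M] [AddCommGroup M'] [Module R M'] [Nontrivial M']
    (f : M →ₗ[R] M') (hf : Function.Surjective f) (N : Submodule R M)
    (hN : IsWeaklyClassical1AbsorbingPrime N) (hker : LinearMap.ker f ≤ N) :
    IsWeaklyClassical1AbsorbingPrime (Submodule.map f N) :=
  stmt_4_general f hf N hN hker
end

section
/- Let K ⊆ N be submodules of M with N proper. If K is a weakly classical 1-absorbing prime submodule of M and N/K is a weakly classical 1-absorbing prime submodule of the quotient module M/K, then N is a weakly classical 1-absorbing prime submodule of M. -/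
/-! If `abcm ∈ K`, the hypothesis on `K` applies directly. Otherwise the image of `abcm` in
`M/K` is a nonzero element of `N/K`, so the hypothesis on `N/K` applies, and since `K ≤ N`
membership in `N/K` pulls back to membership in `N`. -/

theorem Submodule.mkQ_mem_map_mkQ_iff {R M : Type*} [Ring R] [AddCommGroup M] [Module R M]
    {K N : Submodule R M} (hKN : K ≤ N) {x : M} : K.mkQ x ∈ N.map K.mkQ ↔ x ∈ N := by
  rw [← Submodule.mem_comap, Submodule.comap_map_mkQ, sup_eq_right.2 hKN]

theorem stmt_5_general {R : Type*} [CommRing R] {M : Type*} [AddCommGroup M]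
    [Module R M] (K N : Submodule R M) (hKN : K ≤ N) (hN : N ≠ ⊤)
    (hK : IsWeaklyClassical1AbsorbingPrime K)
    (hNK : IsWeaklyClassical1AbsorbingPrime (Submodule.map K.mkQ N)) :
    IsWeaklyClassical1AbsorbingPrime N := by
  refine ⟨hN, fun a b c m ha hb hc hmem hne => ?_⟩
  by_cases hmemK : (a * b * c) • m ∈ K
  · exact (hK.2 a b c m ha hb hc hmemK hne).imp (@hKN _) (@hKN _)
  · have hneQ : (a * b * c) • K.mkQ m ≠ 0 := by
      rwa [← map_smul, Ne, Submodule.mkQ_apply, Submodule.Quotient.mk_eq_zero]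
    have hmemQ : (a * b * c) • K.mkQ m ∈ N.map K.mkQ := by
      rwa [← map_smul, Submodule.mkQ_mem_map_mkQ_iff hKN]
    simpa only [← map_smul, Submodule.mkQ_mem_map_mkQ_iff hKN] using
      hNK.2 a b c (K.mkQ m) ha hb hc hmemQ hneQ

/-- If `K ⊆ N` are submodules of `M` with `N` proper, `K` is weakly
classical 1-absorbing prime in `M` and `N/K` is weakly classical 1-absorbing prime in
`M/K`, then `N` is weakly classical 1-absorbing prime in `M`. -/
theorem stmt_5 {R : Type*} [CommRing R] [Nontrivial R] {M : Type*} [AddCommGroup M]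
    [Module R M] [Nontrivial M] (K N : Submodule R M) (hKN : K ≤ N) (hN : N ≠ ⊤)
    (hK : IsWeaklyClassical1AbsorbingPrime K)
    (hNK : IsWeaklyClassical1AbsorbingPrime (Submodule.map K.mkQ N)) :
    IsWeaklyClassical1AbsorbingPrime N :=
  stmt_5_general K N hKN hN hK hNK
end

section
/- Suppose M is a reduced R-module and N a proper submodule of M. Then N is a weakly classical prime submodule of M if and only if N is both a weakly semiprime submodule and a weakly classical 1-absorbing prime submodule of M. -/
section

variable {R M : Type*} [CommRing R] [AddCommGroup M] [Module R M] {N : Submodule R M}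

theorem mul_smul_eq_zero_of_mul_mul_smul_eq_zero
    (hred : ∀ (a : R) (m : M), (a * a) • m = 0 → a • m = 0) {a b : R} {m : M}
    (h : (a * a * b) • m = 0) : (a * b) • m = 0 := by
  apply hred
  calc (a * b * (a * b)) • m = b • (a * a * b) • m := by rw [smul_smul]; ring_nf
    _ = 0 := by rw [h, smul_zero]

theorem smul_mem_of_mul_self_smul_mem
    (hred : ∀ (a : R) (m : M), (a * a) • m = 0 → a • m = 0)
    (hsemi : ∀ (a : R) (m : M), (a * a) • m ∈ N → (a * a) • m ≠ 0 → a • m ∈ N) {a : R} {m : M}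
    (h : (a * a) • m ∈ N) : a • m ∈ N := by
  by_cases h0 : (a * a) • m = 0
  · rw [hred a m h0]
    exact N.zero_mem
  · exact hsemi a m h h0

theorem smul_mem_of_isUnit_of_mul_smul_mem {a b : R} {m : M} (ha : IsUnit a)
    (h : (a * b) • m ∈ N) : b • m ∈ N := by
  rwa [mul_smul, N.smul_mem_iff_of_isUnit ha] at h

theorem weaklySemiprime_of_weaklyClassicalPrime
    (h : ∀ a b : R, ∀ m : M, (a * b) • m ∈ N → (a * b) • m ≠ 0 → (a • m ∈ N ∨ b • m ∈ N))
    (a : R) (m : M) (hm : (a * a) • m ∈ N) (hne : (a * a) • m ≠ 0) : a • m ∈ N :=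
  (h a a m hm hne).elim id id

theorem isWeaklyClassical1AbsorbingPrime_of_weaklyClassicalPrime (hN : N ≠ ⊤)
    (h : ∀ a b : R, ∀ m : M, (a * b) • m ∈ N → (a * b) • m ≠ 0 → (a • m ∈ N ∨ b • m ∈ N)) :
    IsWeaklyClassical1AbsorbingPrime N :=
  ⟨hN, fun a b c m _ _ _ hm hne ↦ h (a * b) c m hm hne⟩

theorem weaklyClassicalPrime_of_isWeaklyClassical1AbsorbingPrime
    (hred : ∀ (a : R) (m : M), (a * a) • m = 0 → a • m = 0)
    (hsemi : ∀ (a : R) (m : M), (a * a) • m ∈ N → (a * a) • m ≠ 0 → a • m ∈ N)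
    (h1abs : IsWeaklyClassical1AbsorbingPrime N) (a b : R) (m : M) (hm : (a * b) • m ∈ N)
    (hne : (a * b) • m ≠ 0) : a • m ∈ N ∨ b • m ∈ N := by
  by_cases ha : IsUnit a
  · exact .inr (smul_mem_of_isUnit_of_mul_smul_mem ha hm)
  by_cases hb : IsUnit b
  · exact .inl (smul_mem_of_isUnit_of_mul_smul_mem hb (mul_comm a b ▸ hm))
  have hmem : (a * a * b) • m ∈ N := by
    rw [mul_assoc, mul_smul]
    exact N.smul_mem a hm
  have hne' : (a * a * b) • m ≠ 0 := fun h0 ↦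
    hne (mul_smul_eq_zero_of_mul_mul_smul_eq_zero hred h0)
  exact (h1abs.2 a a b m ha ha hb hmem hne').imp_left (smul_mem_of_mul_self_smul_mem hred hsemi)

end

theorem stmt_7_general {R : Type*} [CommRing R] {M : Type*} [AddCommGroup M]
    [Module R M] (N : Submodule R M) (hN : N ≠ ⊤)
    (hred : ∀ (a : R) (m : M), (a * a) • m = 0 → a • m = 0) :
    -- weakly classical prime
    (∀ a b : R, ∀ m : M, (a * b) • m ∈ N → (a * b) • m ≠ 0 → (a • m ∈ N ∨ b • m ∈ N)) ↔
      -- weakly semiprime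
      ((∀ (a : R) (m : M), (a * a) • m ∈ N → (a * a) • m ≠ 0 → a • m ∈ N) ∧
        -- weakly classical 1-absorbing prime
        IsWeaklyClassical1AbsorbingPrime N) := by
  exact ⟨fun h ↦ ⟨weaklySemiprime_of_weaklyClassicalPrime h,
      isWeaklyClassical1AbsorbingPrime_of_weaklyClassicalPrime hN h⟩,
    fun ⟨hsemi, h1abs⟩ ↦ weaklyClassicalPrime_of_isWeaklyClassical1AbsorbingPrime hred hsemi h1abs⟩

/-- If `M` is a reduced `R`-module and `N` a proper submodule, then `N` is
weakly classical prime iff `N` is both weakly semiprime and weakly classical 1-absorbing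
prime. -/
theorem stmt_7 {R : Type*} [CommRing R] [Nontrivial R] {M : Type*} [AddCommGroup M]
    [Module R M] [Nontrivial M] (N : Submodule R M) (hN : N ≠ ⊤)
    (hred : ∀ (a : R) (m : M), (a * a) • m = 0 → a • m = 0) :
    -- weakly classical prime
    (∀ a b : R, ∀ m : M, (a * b) • m ∈ N → (a * b) • m ≠ 0 → (a • m ∈ N ∨ b • m ∈ N)) ↔
      -- weakly semiprime
      ((∀ (a : R) (m : M), (a * a) • m ∈ N → (a * a) • m ≠ 0 → a • m ∈ N) ∧
        -- weakly classical 1-absorbing prime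
        IsWeaklyClassical1AbsorbingPrime N) :=
  stmt_7_general N hN hred
end

section
/- Let M be a cyclic R-module. A proper submodule N of M is a weakly 1-absorbing prime submodule if and only if it is a weakly classical 1-absorbing prime submodule of M. -/
/-- If `M` is a cyclic `R`-module, then a proper submodule `N` of `M` is
weakly 1-absorbing prime iff it is weakly classical 1-absorbing prime. -/
theorem stmt_8 {R : Type*} [CommRing R] [Nontrivial R] {M : Type*} [AddCommGroup M]
    [Module R M] [Nontrivial M] (hcyc : ∃ m : M, Submodule.span R {m} = ⊤)
    (N : Submodule R M) (hN : N ≠ ⊤) :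
    -- weakly 1-absorbing prime submodule
    (∀ a b : R, ∀ m : M, ¬ IsUnit a → ¬ IsUnit b →
        (a * b) • m ∈ N → (a * b) • m ≠ 0 → (a * b ∈ N.colon ⊤ ∨ m ∈ N)) ↔
      IsWeaklyClassical1AbsorbingPrime N := by
  obtain ⟨g, hg⟩ := hcyc
  constructor
  · intro h
    refine ⟨hN, fun a b c m ha hb hc hmem hne => ?_⟩
    have h1 : (a * b) • (c • m) ∈ N := by rw [smul_smul]; exact hmem
    have h2 : (a * b) • (c • m) ≠ 0 := by rw [smul_smul]; exact hne
    rcases h a b (c • m) ha hb h1 h2 with hcol | hin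
    · left
      exact Submodule.mem_colon.mp hcol m trivial
    · right; exact hin
  · rintro ⟨-, h⟩ a b m ha hb hmem hne
    have hmspan : m ∈ Submodule.span R {g} := hg ▸ Submodule.mem_top
    obtain ⟨t, ht⟩ := Submodule.mem_span_singleton.mp hmspan
    by_cases htu : IsUnit t
    · left
      refine Submodule.mem_colon.mpr fun x _ => ?_
      have hxspan : x ∈ Submodule.span R {g} := hg ▸ Submodule.mem_top
      obtain ⟨s, hs⟩ := Submodule.mem_span_singleton.mp hxspan
      obtain ⟨u, hu⟩ := htu
      have hgx : x = (s * (↑u⁻¹ : R)) • m := by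
        rw [← hs, ← ht, ← hu, smul_smul, mul_assoc]
        congr 1
        rw [Units.inv_mul, mul_one]
      rw [hgx, smul_comm]
      exact N.smul_mem _ hmem
    · have hmem' : (a * b * t) • g ∈ N := by
        rw [mul_smul, ht]; exact hmem
      have hne' : (a * b * t) • g ≠ 0 := by
        rw [mul_smul, ht]; exact hne
      rcases h a b t g ha hb htu hmem' hne' with habg | htg
      · left
        refine Submodule.mem_colon.mpr fun x _ => ?_
        have hxspan : x ∈ Submodule.span R {g} := hg ▸ Submodule.mem_top
        obtain ⟨s, hs⟩ := Submodule.mem_span_singleton.mp hxspan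
        rw [← hs, smul_comm]
        exact N.smul_mem _ habg
      · right; rw [← ht]; exact htg
end

section
/- Let N be a weakly classical 1-absorbing prime submodule of M, let a, b, c ∈ R be nonunits, and let K be a submodule of M with abcK ⊆ N. If (a, b, c, k) is not a classical 1-quadruple-zero of N for every k ∈ K, then abK ⊆ N or cK ⊆ N. -/
/-- For nonunits `a, b, c ∈ R` and `m ∈ M`, the tuple `(a, b, c, m)` is a classical
1-quadruple-zero of `N` if `abcm = 0`, `abm ∉ N` and `cm ∉ N`. -/
def IsClassical1QuadrupleZero {R : Type*} [CommRing R] {M : Type*} [AddCommGroup M]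
    [Module R M] (N : Submodule R M) (a b c : R) (m : M) : Prop :=
  ¬ IsUnit a ∧ ¬ IsUnit b ∧ ¬ IsUnit c ∧ (a * b * c) • m = 0 ∧
    (a * b) • m ∉ N ∧ c • m ∉ N

/-- `K` lies in the union of `N.comap f` and `N.comap g`, and a submodule covered by two
submodules lies in one of them. -/
theorem Submodule.forall_map_mem_or_forall_map_mem {R M M₂ : Type*} [Ring R] [AddCommGroup M]
    [Module R M] [AddCommGroup M₂] [Module R M₂] {K : Submodule R M} {N : Submodule R M₂}
    {f g : M →ₗ[R] M₂} (h : ∀ k ∈ K, f k ∈ N ∨ g k ∈ N) :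
    (∀ k ∈ K, f k ∈ N) ∨ ∀ k ∈ K, g k ∈ N :=
  (AddSubgroupClass.subset_union (H := K) (K := N.comap f) (L := N.comap g)).mp h

theorem IsWeaklyClassical1AbsorbingPrime.smul_mem_or_smul_mem {R : Type*} [CommRing R]
    {M : Type*} [AddCommGroup M] [Module R M] {N : Submodule R M}
    (hN : IsWeaklyClassical1AbsorbingPrime N) {a b c : R} (ha : ¬ IsUnit a) (hb : ¬ IsUnit b)
    (hc : ¬ IsUnit c) {m : M} (hm : (a * b * c) • m ∈ N)
    (hzero : ¬ IsClassical1QuadrupleZero N a b c m) : (a * b) • m ∈ N ∨ c • m ∈ N := by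
  by_cases h0 : (a * b * c) • m = 0
  · by_contra! h
    exact hzero ⟨ha, hb, hc, h0, h.1, h.2⟩
  · exact hN.2 a b c m ha hb hc hm h0

theorem stmt_9_general {R : Type*} [CommRing R] {M : Type*} [AddCommGroup M]
    [Module R M] (N : Submodule R M)
    (hN : IsWeaklyClassical1AbsorbingPrime N) (a b c : R)
    (ha : ¬ IsUnit a) (hb : ¬ IsUnit b) (hc : ¬ IsUnit c) (K : Submodule R M)
    (hsub : ∀ k ∈ K, (a * b * c) • k ∈ N)
    (hfree : ∀ k ∈ K, ¬ IsClassical1QuadrupleZero N a b c k) :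
    (∀ k ∈ K, (a * b) • k ∈ N) ∨ (∀ k ∈ K, c • k ∈ N) :=
  Submodule.forall_map_mem_or_forall_map_mem (f := LinearMap.lsmul R M (a * b))
    (g := LinearMap.lsmul R M c) fun k hk ↦
      hN.smul_mem_or_smul_mem ha hb hc (hsub k hk) (hfree k hk)

/-- If `N` is weakly classical 1-absorbing prime, `a, b, c` are nonunits,
`K` is a submodule with `abcK ⊆ N`, and `(a, b, c, k)` is not a classical
1-quadruple-zero of `N` for every `k ∈ K`, then `abK ⊆ N` or `cK ⊆ N`. -/
theorem stmt_9 {R : Type*} [CommRing R] [Nontrivial R] {M : Type*} [AddCommGroup M]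
    [Module R M] [Nontrivial M] (N : Submodule R M)
    (hN : IsWeaklyClassical1AbsorbingPrime N) (a b c : R)
    (ha : ¬ IsUnit a) (hb : ¬ IsUnit b) (hc : ¬ IsUnit c) (K : Submodule R M)
    (hsub : ∀ k ∈ K, (a * b * c) • k ∈ N)
    (hfree : ∀ k ∈ K, ¬ IsClassical1QuadrupleZero N a b c k) :
    (∀ k ∈ K, (a * b) • k ∈ N) ∨ (∀ k ∈ K, c • k ∈ N) :=
  stmt_9_general N hN a b c ha hb hc K hsub hfree
end

section
/- Let N be a weakly classical 1-absorbing prime submodule of M, let I, J, L be proper ideals of R and K a submodule of M with IJLK ⊆ N. If (a, b, c, k) is not a classical 1-quadruple-zero of N for all a ∈ I, b ∈ J, c ∈ L and k ∈ K, then IJK ⊆ N or LK ⊆ N. -/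
theorem AddSubgroup.forall_smul_mem_or_forall_smul_mem {R M : Type*} [AddGroup M]
    [DistribSMul R M] {K N : AddSubgroup M} {r s : R}
    (h : ∀ k ∈ K, r • k ∈ N ∨ s • k ∈ N) :
    (∀ k ∈ K, r • k ∈ N) ∨ ∀ k ∈ K, s • k ∈ N :=
  AddSubgroupClass.subset_union (H := K) (K := N.comap (DistribSMul.toAddMonoidHom M r))
    (L := N.comap (DistribSMul.toAddMonoidHom M s)) |>.mp h

theorem Submodule.smul_smul_le_iff {R M : Type*} [CommSemiring R] [AddCommMonoid M] [Module R M]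
    {I J : Ideal R} {K N : Submodule R M} :
    I • J • K ≤ N ↔ ∀ a ∈ I, ∀ b ∈ J, ∀ k ∈ K, (a * b) • k ∈ N := by
  refine ⟨fun h a ha b hb k hk ↦ mul_smul a b k ▸ h (smul_mem_smul ha (smul_mem_smul hb hk)),
    fun h ↦ smul_le.mpr fun a ha x hx ↦ ?_⟩
  refine smul_induction_on hx (fun b hb k hk ↦ ?_) fun x y hx hy ↦ ?_
  · simpa only [smul_smul] using h a ha b hb k hk
  · simpa only [smul_add] using N.add_mem hx hy

theorem IsWeaklyClassical1AbsorbingPrime.mul_smul_mem_or_smul_mem {R M : Type*} [CommRing R]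
    [AddCommGroup M] [Module R M] {N : Submodule R M} (hN : IsWeaklyClassical1AbsorbingPrime N)
    {a b c : R} {m : M} (ha : ¬ IsUnit a) (hb : ¬ IsUnit b) (hc : ¬ IsUnit c)
    (hm : (a * b * c) • m ∈ N) (hzero : ¬ IsClassical1QuadrupleZero N a b c m) :
    (a * b) • m ∈ N ∨ c • m ∈ N := by
  by_cases h : (a * b * c) • m = 0
  · by_contra! hnot
    exact hzero ⟨ha, hb, hc, h, hnot⟩
  · exact hN.2 a b c m ha hb hc hm h

theorem stmt_10_general {R : Type*} [CommRing R] {M : Type*} [AddCommGroup M]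
    [Module R M] (N : Submodule R M)
    (hN : IsWeaklyClassical1AbsorbingPrime N) (I J L : Ideal R)
    (hI : I ≠ ⊤) (hJ : J ≠ ⊤) (hL : L ≠ ⊤) (K : Submodule R M)
    (hsub : I • (J • (L • K)) ≤ N)
    (hfree : ∀ a ∈ I, ∀ b ∈ J, ∀ c ∈ L, ∀ k ∈ K, ¬ IsClassical1QuadrupleZero N a b c k) :
    I • (J • K) ≤ N ∨ L • K ≤ N := by
  refine or_iff_not_imp_right.mpr fun hLK ↦ ?_
  obtain ⟨c, hc, k₀, hk₀, hck₀⟩ : ∃ c ∈ L, ∃ k₀ ∈ K, c • k₀ ∉ N := by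
    simpa only [Submodule.smul_le, not_forall, exists_prop] using hLK
  refine Submodule.smul_smul_le_iff.mpr fun a ha b hb ↦ ?_
  have hdich : ∀ k ∈ K, (a * b) • k ∈ N ∨ c • k ∈ N := fun k hk ↦ by
    have habck : (a * b * c) • k ∈ N := by
      simpa only [mul_smul] using hsub <|
        Submodule.smul_mem_smul ha <| Submodule.smul_mem_smul hb <| Submodule.smul_mem_smul hc hk
    exact hN.mul_smul_mem_or_smul_mem (coe_subset_nonunits hI ha) (coe_subset_nonunits hJ hb)
      (coe_subset_nonunits hL hc) habck (hfree a ha b hb c hc k hk)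
  exact (AddSubgroup.forall_smul_mem_or_forall_smul_mem (K := K.toAddSubgroup)
    (N := N.toAddSubgroup) hdich).resolve_right fun h ↦ hck₀ (h k₀ hk₀)

/-- If `N` is weakly classical 1-absorbing prime, `I, J, L` are proper
ideals, `K` is a submodule with `IJLK ⊆ N`, and `(a, b, c, k)` is not a classical
1-quadruple-zero of `N` for all `a ∈ I`, `b ∈ J`, `c ∈ L`, `k ∈ K`, then `IJK ⊆ N` or
`LK ⊆ N`. -/
theorem stmt_10 {R : Type*} [CommRing R] [Nontrivial R] {M : Type*} [AddCommGroup M]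
    [Module R M] [Nontrivial M] (N : Submodule R M)
    (hN : IsWeaklyClassical1AbsorbingPrime N) (I J L : Ideal R)
    (hI : I ≠ ⊤) (hJ : J ≠ ⊤) (hL : L ≠ ⊤) (K : Submodule R M)
    (hsub : I • (J • (L • K)) ≤ N)
    (hfree : ∀ a ∈ I, ∀ b ∈ J, ∀ c ∈ L, ∀ k ∈ K, ¬ IsClassical1QuadrupleZero N a b c k) :
    I • (J • K) ≤ N ∨ L • K ≤ N :=
  stmt_10_general N hN I J L hI hJ hL K hsub hfree
end

section
/- A proper submodule N of M is a weakly classical 1-absorbing prime submodule if and only if for all proper ideals I, J, K of R and every m ∈ M, if IJKm ⊆ N and IJKm ≠ 0, then IJm ⊆ N or Km ⊆ N. -/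
namespace Submodule

section CommSemiring

variable {R M : Type*} [CommSemiring R] [AddCommMonoid M] [Module R M]

theorem smul_le_iff_le_colon {I : Ideal R} {Q P : Submodule R M} :
    I • Q ≤ P ↔ I ≤ P.colon Q := by
  rw [smul_le]
  simp only [SetLike.le_def, mem_colon, SetLike.mem_coe]

theorem smul_le_iff_forall_le_comap_lsmul {I : Ideal R} {Q P : Submodule R M} :
    I • Q ≤ P ↔ ∀ a ∈ I, Q ≤ P.comap (LinearMap.lsmul R M a) := by
  rw [smul_le]
  simp only [SetLike.le_def, mem_comap, LinearMap.lsmul_apply]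

theorem span_singleton_smul_span_singleton (r : R) (x : M) :
    Ideal.span {r} • span R {x} = span R {r • x} := by
  rw [span_smul_span, Set.singleton_smul_singleton]

end CommSemiring

theorem smul_le_or_smul_le {R M : Type*} [CommRing R] [AddCommMonoid M] [Module R M]
    {I : Ideal R} {Q Q' P P' : Submodule R M}
    (h : ∀ a ∈ I, Q ≤ P.comap (LinearMap.lsmul R M a) ∨ Q' ≤ P'.comap (LinearMap.lsmul R M a)) :
    I • Q ≤ P ∨ I • Q' ≤ P' := by
  simp only [smul_le_iff_le_colon, ← AddSubgroupClass.subset_union]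
  intro a ha
  simpa only [Set.mem_union, SetLike.mem_coe, mem_colon, SetLike.le_def, mem_comap,
    LinearMap.lsmul_apply] using h a ha

end Submodule

namespace IsWeaklyClassical1AbsorbingPrime

open Submodule LinearMap

variable {R M : Type*} [CommRing R] [AddCommGroup M] [Module R M] {N : Submodule R M}

theorem smul_smul_mem_or_smul_mem (hN : IsWeaklyClassical1AbsorbingPrime N) {a b c : R} {m : M}
    (ha : ¬IsUnit a) (hb : ¬IsUnit b) (hc : ¬IsUnit c) (hmem : a • b • c • m ∈ N)
    (hne : a • b • c • m ≠ 0) : a • b • m ∈ N ∨ c • m ∈ N := by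
  have := hN.2 a b c m ha hb hc (by rwa [mul_smul, mul_smul]) (by rwa [mul_smul, mul_smul])
  rwa [mul_smul] at this

theorem absorbs_scalar_scalar_ideal (hN : IsWeaklyClassical1AbsorbingPrime N) {a b : R}
    (ha : ¬IsUnit a) (hb : ¬IsUnit b) {K : Ideal R} (hK : K ≠ ⊤) {m : M}
    (h : K • span R {m} ≤ (N.comap (lsmul R M a)).comap (lsmul R M b)) :
    K • span R {m} ≤ ((⊥ : Submodule R M).comap (lsmul R M a)).comap (lsmul R M b) ∨
      span R {m} ≤ (N.comap (lsmul R M a)).comap (lsmul R M b) ∨ K • span R {m} ≤ N := by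
  by_cases hab : span R {m} ≤ (N.comap (lsmul R M a)).comap (lsmul R M b)
  · exact .inr (.inl hab)
  refine (smul_le_or_smul_le fun c hc ↦ ?_).imp_right .inr
  simp only [span_singleton_le_iff_mem, mem_comap, lsmul_apply, mem_bot] at hab ⊢
  have hmem : a • b • c • m ∈ N := by
    simpa only [span_singleton_le_iff_mem, mem_comap, lsmul_apply] using
      smul_le_iff_forall_le_comap_lsmul.mp h c hc
  by_cases h0 : a • b • c • m = 0
  · exact .inl h0
  · exact .inr <|
      (hN.smul_smul_mem_or_smul_mem ha hb (coe_subset_nonunits hK hc) hmem h0).resolve_left hab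

theorem absorbs_scalar_ideal_ideal (hN : IsWeaklyClassical1AbsorbingPrime N) {a : R}
    (ha : ¬IsUnit a) {J K : Ideal R} (hJ : J ≠ ⊤) (hK : K ≠ ⊤) {m : M}
    (h : J • (K • span R {m}) ≤ N.comap (lsmul R M a)) :
    J • (K • span R {m}) ≤ (⊥ : Submodule R M).comap (lsmul R M a) ∨
      J • span R {m} ≤ N.comap (lsmul R M a) ∨ K • span R {m} ≤ N := by
  by_cases hKm : K • span R {m} ≤ N
  · exact .inr (.inr hKm)
  refine (smul_le_or_smul_le fun b hb ↦ ?_).imp_right .inl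
  exact (hN.absorbs_scalar_scalar_ideal ha (coe_subset_nonunits hJ hb) hK
    (smul_le_iff_forall_le_comap_lsmul.mp h b hb)).imp_right (·.resolve_right hKm)

theorem absorbs_ideal_ideal_ideal (hN : IsWeaklyClassical1AbsorbingPrime N) {I J K : Ideal R}
    (hI : I ≠ ⊤) (hJ : J ≠ ⊤) (hK : K ≠ ⊤) {m : M} (h : I • (J • (K • span R {m})) ≤ N) :
    I • (J • (K • span R {m})) ≤ ⊥ ∨ I • (J • span R {m}) ≤ N ∨ K • span R {m} ≤ N := by
  by_cases hKm : K • span R {m} ≤ N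
  · exact .inr (.inr hKm)
  refine (smul_le_or_smul_le fun a ha ↦ ?_).imp_right .inl
  exact (hN.absorbs_scalar_ideal_ideal (coe_subset_nonunits hI ha) hJ hK
    (smul_le_iff_forall_le_comap_lsmul.mp h a ha)).imp_right (·.resolve_right hKm)

end IsWeaklyClassical1AbsorbingPrime

theorem stmt_11_general {R : Type*} [CommRing R] {M : Type*} [AddCommGroup M]
    [Module R M] (N : Submodule R M) (hN : N ≠ ⊤) :
    IsWeaklyClassical1AbsorbingPrime N ↔
      ∀ I J K : Ideal R, I ≠ ⊤ → J ≠ ⊤ → K ≠ ⊤ → ∀ m : M,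
        I • (J • (K • (Submodule.span R {m}))) ≤ N →
        I • (J • (K • (Submodule.span R {m}))) ≠ ⊥ →
        (I • (J • (Submodule.span R {m})) ≤ N ∨ K • (Submodule.span R {m}) ≤ N) := by
  refine ⟨fun hW I J K hI hJ hK m hle hne ↦ ?_, fun h ↦ ⟨hN, fun a b c m ha hb hc hmem hne ↦ ?_⟩⟩
  · exact (hW.absorbs_ideal_ideal_ideal hI hJ hK hle).resolve_left (hne <| le_bot_iff.mp ·)
  · rw [← Ideal.span_singleton_eq_top] at ha hb hc
    have key := h _ _ _ ha hb hc m
    simp only [Submodule.span_singleton_smul_span_singleton, Submodule.span_singleton_le_iff_mem,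
      ne_eq, Submodule.span_singleton_eq_bot, mul_smul] at key hmem hne ⊢
    exact key hmem hne

/-- A proper submodule `N` of `M` is weakly classical 1-absorbing prime iff
for all proper ideals `I, J, K` of `R` and every `m ∈ M`, `IJKm ⊆ N` and `IJKm ≠ 0`
imply `IJm ⊆ N` or `Km ⊆ N`. -/
theorem stmt_11 {R : Type*} [CommRing R] [Nontrivial R] {M : Type*} [AddCommGroup M]
    [Module R M] [Nontrivial M] (N : Submodule R M) (hN : N ≠ ⊤) :
    IsWeaklyClassical1AbsorbingPrime N ↔
      ∀ I J K : Ideal R, I ≠ ⊤ → J ≠ ⊤ → K ≠ ⊤ → ∀ m : M,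
        I • (J • (K • (Submodule.span R {m}))) ≤ N →
        I • (J • (K • (Submodule.span R {m}))) ≠ ⊥ →
        (I • (J • (Submodule.span R {m})) ≤ N ∨ K • (Submodule.span R {m}) ≤ N) :=
  stmt_11_general N hN
end

section
/- A proper submodule N of M is a weakly classical 1-absorbing prime submodule if and only if for all nonunits a, b, c ∈ R one has (N :_M abc) = (0 :_M abc) ∪ (N :_M ab) ∪ (N :_M c) as sets. -/
section ColonUnion

variable {R M : Type*} [CommRing R] [AddCommGroup M] [Module R M]

theorem union_subset_setOf_mul_smul_mem (N : Submodule R M) (a b c : R) :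
    {m : M | (a * b * c) • m = 0} ∪ {m : M | (a * b) • m ∈ N} ∪ {m : M | c • m ∈ N} ⊆
      {m : M | (a * b * c) • m ∈ N} := by
  rintro m ((hzero | hab) | hc) <;> rw [Set.mem_ofPred_eq] at *
  · rw [hzero]
    exact N.zero_mem
  · rw [mul_comm, mul_smul]
    exact N.smul_mem c hab
  · rw [mul_smul]
    exact N.smul_mem (a * b) hc

theorem setOf_mul_smul_mem_eq_union_iff (N : Submodule R M) (a b c : R) :
    {m : M | (a * b * c) • m ∈ N} =
        {m : M | (a * b * c) • m = 0} ∪ {m : M | (a * b) • m ∈ N} ∪ {m : M | c • m ∈ N} ↔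
      ∀ m : M, (a * b * c) • m ∈ N → (a * b * c) • m ≠ 0 → (a * b) • m ∈ N ∨ c • m ∈ N := by
  rw [Set.Subset.antisymm_iff, and_iff_left (union_subset_setOf_mul_smul_mem N a b c)]
  refine forall_congr' fun m => ?_
  simp only [Set.mem_union, Set.mem_ofPred_eq, or_assoc]
  tauto

end ColonUnion

theorem stmt_12_general {R : Type*} [CommRing R] {M : Type*} [AddCommGroup M]
    [Module R M] (N : Submodule R M) (hN : N ≠ ⊤) :
    IsWeaklyClassical1AbsorbingPrime N ↔
      ∀ a b c : R, ¬ IsUnit a → ¬ IsUnit b → ¬ IsUnit c →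
        {m : M | (a * b * c) • m ∈ N} =
          {m : M | (a * b * c) • m = 0} ∪ {m : M | (a * b) • m ∈ N} ∪ {m : M | c • m ∈ N} := by
  rw [IsWeaklyClassical1AbsorbingPrime, and_iff_right hN]
  simp only [setOf_mul_smul_mem_eq_union_iff]
  exact ⟨fun h a b c ha hb hc m => h a b c m ha hb hc,
    fun h a b c m ha hb hc => h a b c ha hb hc m⟩

/-- A proper submodule `N` of `M` is weakly classical 1-absorbing prime iff
for all nonunits `a, b, c ∈ R`, `(N :_M abc) = (0 :_M abc) ∪ (N :_M ab) ∪ (N :_M c)`. -/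
theorem stmt_12 {R : Type*} [CommRing R] [Nontrivial R] {M : Type*} [AddCommGroup M]
    [Module R M] [Nontrivial M] (N : Submodule R M) (hN : N ≠ ⊤) :
    IsWeaklyClassical1AbsorbingPrime N ↔
      ∀ a b c : R, ¬ IsUnit a → ¬ IsUnit b → ¬ IsUnit c →
        {m : M | (a * b * c) • m ∈ N} =
          {m : M | (a * b * c) • m = 0} ∪ {m : M | (a * b) • m ∈ N} ∪ {m : M | c • m ∈ N} :=
  stmt_12_general N hN
end

section
/- Let N be a weakly classical 1-absorbing prime submodule of M and suppose (a, b, c, m) is a classical 1-quadruple-zero of N for some nonunits a, b, c ∈ R and m ∈ M. Then abcn = 0 for every n ∈ N, and abxm = 0 for every x ∈ (N :_R M). -/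
namespace Submodule

variable {R M : Type*} [CommRing R] [AddCommGroup M] [Module R M] (N : Submodule R M)

theorem smul_add_mem_iff {r : R} {m n : M} (hn : n ∈ N) : r • (m + n) ∈ N ↔ r • m ∈ N := by
  rw [smul_add, N.add_mem_iff_left (N.smul_mem r hn)]

theorem add_smul_mem_iff {r s : R} {m : M} (hs : s • m ∈ N) : (r + s) • m ∈ N ↔ r • m ∈ N := by
  rw [add_smul, N.add_mem_iff_left hs]

end Submodule

theorem IsWeaklyClassical1AbsorbingPrime.smul_eq_zero {R M : Type*} [CommRing R] [AddCommGroup M]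
    [Module R M] {N : Submodule R M} (hN : IsWeaklyClassical1AbsorbingPrime N) {a b c : R} {m : M}
    (ha : ¬ IsUnit a) (hb : ¬ IsUnit b) (hc : ¬ IsUnit c) (habc : (a * b * c) • m ∈ N)
    (habm : (a * b) • m ∉ N) (hcm : c • m ∉ N) : (a * b * c) • m = 0 := by
  by_contra hne
  exact (hN.2 a b c m ha hb hc habc hne).elim habm hcm

theorem stmt_13_general {R : Type*} [CommRing R] {M : Type*} [AddCommGroup M]
    [Module R M] (N : Submodule R M)
    (hN : IsWeaklyClassical1AbsorbingPrime N) (a b c : R) (m : M)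
    (hquad : IsClassical1QuadrupleZero N a b c m) :
    (∀ n ∈ N, (a * b * c) • n = 0) ∧ (∀ x ∈ N.colon ⊤, (a * b * x) • m = 0) := by
  obtain ⟨ha, hb, hc, habc, habm, hcm⟩ := hquad
  constructor
  · intro n hn
    have hshift : (a * b * c) • (m + n) = (a * b * c) • n := by rw [smul_add, habc, zero_add]
    rw [← hshift]
    refine hN.smul_eq_zero ha hb hc ?_ ?_ ?_
    · rw [hshift]; exact N.smul_mem _ hn
    · rwa [N.smul_add_mem_iff hn]
    · rwa [N.smul_add_mem_iff hn]
  · intro x hx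
    have hxm : x • m ∈ N := Submodule.mem_colon.mp hx m trivial
    have hshift : (a * b * (c + x)) • m = (a * b * x) • m := by
      rw [mul_add, add_smul, habc, zero_add]
    have hcx : ¬ IsUnit (c + x) := fun hu ↦ habm <| (N.smul_mem_iff_of_isUnit hu).mp <| by
      rw [smul_smul, mul_comm, hshift, mul_smul]
      exact N.smul_mem _ hxm
    rw [← hshift]
    refine hN.smul_eq_zero ha hb hcx ?_ habm ?_
    · rw [hshift, mul_smul]; exact N.smul_mem _ hxm
    · rwa [N.add_smul_mem_iff hxm]

/-- If `N` is weakly classical 1-absorbing prime and `(a, b, c, m)` is a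
classical 1-quadruple-zero of `N`, then `abcN = 0` and `ab(N :_R M)m = 0`. -/
theorem stmt_13 {R : Type*} [CommRing R] [Nontrivial R] {M : Type*} [AddCommGroup M]
    [Module R M] [Nontrivial M] (N : Submodule R M)
    (hN : IsWeaklyClassical1AbsorbingPrime N) (a b c : R) (m : M)
    (hquad : IsClassical1QuadrupleZero N a b c m) :
    (∀ n ∈ N, (a * b * c) • n = 0) ∧ (∀ x ∈ N.colon ⊤, (a * b * x) • m = 0) :=
  stmt_13_general N hN a b c m hquad
end

section
/- Let N be a weakly classical 1-absorbing prime submodule of M and suppose (a, b, c, m) is a classical 1-quadruple-zero of N such that acm ∉ N and bcm ∉ N. Then for all x, y, z ∈ (N :_R M): acxm = 0, bcxm = 0, axym = 0, bxym = 0, cxym = 0, and xyzm = 0 (in particular (N :_R M)³m = 0). -/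
/-- If `s` is a unit and `(r*s) • m ∈ N` then `r • m ∈ N`. -/
lemma aux_unit_cancel {R : Type*} [CommRing R] {M : Type*} [AddCommGroup M] [Module R M]
    (N : Submodule R M) {r s : R} (hu : IsUnit s) {m : M} (h : (r * s) • m ∈ N) :
    r • m ∈ N := by
  obtain ⟨v, hv⟩ := hu.exists_left_inv
  have : r • m = v • ((r * s) • m) := by
    rw [← mul_smul]
    congr 1
    rw [mul_comm r s, ← mul_assoc, hv, one_mul]
  rw [this]
  exact N.smul_mem v h

/-- If `(p+s) • m ∈ N` and `s • m ∈ N` then `p • m ∈ N`. -/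
lemma aux_extract {R : Type*} [CommRing R] {M : Type*} [AddCommGroup M] [Module R M]
    (N : Submodule R M) {p s : R} {m : M} (h : (p + s) • m ∈ N) (hs : s • m ∈ N) :
    p • m ∈ N := by
  have e : p • m = (p + s) • m - s • m := by rw [add_smul]; abel
  rw [e]
  exact N.sub_mem h hs

/-- If `N` is weakly classical 1-absorbing prime and `(a, b, c, m)` is a
classical 1-quadruple-zero of `N` with `acm ∉ N` and `bcm ∉ N`, then
`ac(N:M)m = bc(N:M)m = a(N:M)²m = b(N:M)²m = c(N:M)²m = 0` and `(N:M)³m = 0`. -/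
theorem stmt_14 {R : Type*} [CommRing R] [Nontrivial R] {M : Type*} [AddCommGroup M]
    [Module R M] [Nontrivial M] (N : Submodule R M)
    (hN : IsWeaklyClassical1AbsorbingPrime N) (a b c : R) (m : M)
    (hquad : IsClassical1QuadrupleZero N a b c m)
    (hac : (a * c) • m ∉ N) (hbc : (b * c) • m ∉ N) :
    ∀ x ∈ N.colon ⊤, ∀ y ∈ N.colon ⊤, ∀ z ∈ N.colon ⊤,
      (a * c * x) • m = 0 ∧ (b * c * x) • m = 0 ∧ (a * x * y) • m = 0 ∧
        (b * x * y) • m = 0 ∧ (c * x * y) • m = 0 ∧ (x * y * z) • m = 0 := by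
  obtain ⟨hNtop, hwk⟩ := hN
  obtain ⟨ha, hb, hc, habc, hab, hcm⟩ := hquad
  have hmem : ∀ w ∈ N.colon ⊤, w • m ∈ N := fun w hw =>
    Submodule.mem_colon.mp hw m trivial
  have hmul : ∀ w ∈ N.colon ⊤, ∀ r : R, (r * w) • m ∈ N := fun w hw r => by
    rw [mul_smul]; exact N.smul_mem r (hmem w hw)
  -- Step 1 : (a*b*w) • m = 0 for all w ∈ (N : M)
  have habx : ∀ w ∈ N.colon ⊤, (a * b * w) • m = 0 := by
    intro w hw
    by_contra h0
    have h1 : (a * b * (c + w)) • m = (a * b * w) • m := by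
      rw [show a * b * (c + w) = a * b * c + a * b * w by ring, add_smul, habc, zero_add]
    have hmemN : (a * b * (c + w)) • m ∈ N := by rw [h1]; exact hmul w hw (a * b)
    have hne : (a * b * (c + w)) • m ≠ 0 := by rw [h1]; exact h0
    have hcw : ¬ IsUnit (c + w) := fun hu => hab (aux_unit_cancel N hu
      (by rwa [show a * b * (c + w) = a * b * (c + w) by ring] at hmemN))
    rcases hwk a b (c + w) m ha hb hcw hmemN hne with h | h
    · exact hab h
    · exact hcm (aux_extract N h (hmem w hw))
  -- Step 2 : (a*c*w) • m = 0
  have hacx : ∀ w ∈ N.colon ⊤, (a * c * w) • m = 0 := by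
    intro w hw
    by_contra h0
    have h1 : (a * (b + w) * c) • m = (a * c * w) • m := by
      rw [show a * (b + w) * c = a * b * c + a * c * w by ring, add_smul, habc, zero_add]
    have hmemN : (a * (b + w) * c) • m ∈ N := by rw [h1]; exact hmul w hw (a * c)
    have hne : (a * (b + w) * c) • m ≠ 0 := by rw [h1]; exact h0
    have hbw : ¬ IsUnit (b + w) := fun hu => hac (aux_unit_cancel N hu
      (by rwa [show a * c * (b + w) = a * (b + w) * c by ring]))
    rcases hwk a (b + w) c m ha hbw hc hmemN hne with h | h
    · exact hab (aux_extract N (by rwa [show a * (b + w) = a * b + a * w by ring] at h)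
        (hmul w hw a))
    · exact hcm h
  -- Step 3 : (b*c*w) • m = 0
  have hbcx : ∀ w ∈ N.colon ⊤, (b * c * w) • m = 0 := by
    intro w hw
    by_contra h0
    have h1 : (b * (a + w) * c) • m = (b * c * w) • m := by
      rw [show b * (a + w) * c = a * b * c + b * c * w by ring, add_smul, habc, zero_add]
    have hmemN : (b * (a + w) * c) • m ∈ N := by rw [h1]; exact hmul w hw (b * c)
    have hne : (b * (a + w) * c) • m ≠ 0 := by rw [h1]; exact h0
    have haw : ¬ IsUnit (a + w) := fun hu => hbc (aux_unit_cancel N hu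
      (by rwa [show b * c * (a + w) = b * (a + w) * c by ring]))
    rcases hwk b (a + w) c m hb haw hc hmemN hne with h | h
    · exact hab (aux_extract N (by rwa [show a * b + b * w = b * (a + w) by ring]) (hmul w hw b))
    · exact hcm h
  -- Step 4 : (a*w*v) • m = 0
  have haxy : ∀ w ∈ N.colon ⊤, ∀ v ∈ N.colon ⊤, (a * w * v) • m = 0 := by
    intro w hw v hv
    by_contra h0
    have h1 : (a * (b + w) * (c + v)) • m = (a * w * v) • m := by
      rw [show a * (b + w) * (c + v) = a * b * c + (a * b * v + (a * c * w + a * w * v)) by ring,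
        add_smul, add_smul, add_smul, habc, habx v hv, hacx w hw]
      simp
    have hmemN : (a * (b + w) * (c + v)) • m ∈ N := by rw [h1]; exact hmul v hv (a * w)
    have hne : (a * (b + w) * (c + v)) • m ≠ 0 := by rw [h1]; exact h0
    have hbw : ¬ IsUnit (b + w) := by
      intro hu
      have h2 : (a * (c + v)) • m ∈ N := aux_unit_cancel N hu
        (by rwa [show a * (c + v) * (b + w) = a * (b + w) * (c + v) by ring])
      exact hac (aux_extract N (by rwa [show a * (c + v) = a * c + a * v by ring] at h2)
        (hmul v hv a))
    have hcv : ¬ IsUnit (c + v) := by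
      intro hu
      have h2 : (a * (b + w)) • m ∈ N := aux_unit_cancel N hu hmemN
      exact hab (aux_extract N (by rwa [show a * (b + w) = a * b + a * w by ring] at h2)
        (hmul w hw a))
    rcases hwk a (b + w) (c + v) m ha hbw hcv hmemN hne with h | h
    · exact hab (aux_extract N (by rwa [show a * (b + w) = a * b + a * w by ring] at h)
        (hmul w hw a))
    · exact hcm (aux_extract N h (hmem v hv))
  -- Step 5 : (b*w*v) • m = 0
  have hbxy : ∀ w ∈ N.colon ⊤, ∀ v ∈ N.colon ⊤, (b * w * v) • m = 0 := by
    intro w hw v hv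
    by_contra h0
    have h1 : (b * (a + w) * (c + v)) • m = (b * w * v) • m := by
      rw [show b * (a + w) * (c + v) = a * b * c + (a * b * v + (b * c * w + b * w * v)) by ring,
        add_smul, add_smul, add_smul, habc, habx v hv, hbcx w hw]
      simp
    have hmemN : (b * (a + w) * (c + v)) • m ∈ N := by rw [h1]; exact hmul v hv (b * w)
    have hne : (b * (a + w) * (c + v)) • m ≠ 0 := by rw [h1]; exact h0
    have haw : ¬ IsUnit (a + w) := by
      intro hu
      have h2 : (b * (c + v)) • m ∈ N := aux_unit_cancel N hu
        (by rwa [show b * (c + v) * (a + w) = b * (a + w) * (c + v) by ring])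
      exact hbc (aux_extract N (by rwa [show b * (c + v) = b * c + b * v by ring] at h2)
        (hmul v hv b))
    have hcv : ¬ IsUnit (c + v) := by
      intro hu
      have h2 : (b * (a + w)) • m ∈ N := aux_unit_cancel N hu hmemN
      exact hab (aux_extract N (by rwa [show b * (a + w) = a * b + b * w by ring] at h2)
        (hmul w hw b))
    rcases hwk b (a + w) (c + v) m hb haw hcv hmemN hne with h | h
    · exact hab (aux_extract N (by rwa [show b * (a + w) = a * b + b * w by ring] at h)
        (hmul w hw b))
    · exact hcm (aux_extract N h (hmem v hv))
  -- Step 6 : (c*w*v) • m = 0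
  have hcxy : ∀ w ∈ N.colon ⊤, ∀ v ∈ N.colon ⊤, (c * w * v) • m = 0 := by
    intro w hw v hv
    by_contra h0
    have h1 : ((a + w) * (b + v) * c) • m = (c * w * v) • m := by
      rw [show (a + w) * (b + v) * c = a * b * c + (a * c * v + (b * c * w + c * w * v)) by ring,
        add_smul, add_smul, add_smul, habc, hacx v hv, hbcx w hw]
      simp
    have hmemN : ((a + w) * (b + v) * c) • m ∈ N := by rw [h1]; exact hmul v hv (c * w)
    have hne : ((a + w) * (b + v) * c) • m ≠ 0 := by rw [h1]; exact h0
    have haw : ¬ IsUnit (a + w) := by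
      intro hu
      have h2 : ((b + v) * c) • m ∈ N := aux_unit_cancel N hu
        (by rwa [show (b + v) * c * (a + w) = (a + w) * (b + v) * c by ring])
      exact hbc (aux_extract N (by rwa [show (b + v) * c = b * c + c * v by ring] at h2)
        (hmul v hv c))
    have hbv : ¬ IsUnit (b + v) := by
      intro hu
      have h2 : ((a + w) * c) • m ∈ N := aux_unit_cancel N hu
        (by rwa [show (a + w) * c * (b + v) = (a + w) * (b + v) * c by ring])
      exact hac (aux_extract N (by rwa [show (a + w) * c = a * c + c * w by ring] at h2)
        (hmul w hw c))
    rcases hwk (a + w) (b + v) c m haw hbv hc hmemN hne with h | h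
    · have hs : (a * v + (b * w + w * v)) • m ∈ N := by
        rw [add_smul, add_smul]
        exact N.add_mem (hmul v hv a) (N.add_mem (hmul w hw b) (hmul v hv w))
      exact hab (aux_extract N
        (by rwa [show (a + w) * (b + v) = a * b + (a * v + (b * w + w * v)) by ring] at h) hs)
    · exact hcm h
  -- Conclusion
  intro x hx y hy z hz
  refine ⟨hacx x hx, hbcx x hx, haxy x hx y hy, hbxy x hx y hy, hcxy x hx y hy, ?_⟩
  by_contra h0
  have h1 : ((a + x) * (b + y) * (c + z)) • m = (x * y * z) • m := by
    rw [show (a + x) * (b + y) * (c + z) = a * b * c + (a * b * z + (a * c * y + (a * y * z +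
        (b * c * x + (b * x * z + (c * x * y + x * y * z)))))) by ring,
      add_smul, add_smul, add_smul, add_smul, add_smul, add_smul, add_smul,
      habc, habx z hz, hacx y hy, haxy y hy z hz, hbcx x hx, hbxy x hx z hz, hcxy x hx y hy]
    simp
  have hmemN : ((a + x) * (b + y) * (c + z)) • m ∈ N := by rw [h1]; exact hmul z hz (x * y)
  have hne : ((a + x) * (b + y) * (c + z)) • m ≠ 0 := by rw [h1]; exact h0
  have hax : ¬ IsUnit (a + x) := by
    intro hu
    have h2 : ((b + y) * (c + z)) • m ∈ N := aux_unit_cancel N hu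
      (by rwa [show (b + y) * (c + z) * (a + x) = (a + x) * (b + y) * (c + z) by ring])
    have hs : (b * z + (c * y + y * z)) • m ∈ N := by
      rw [add_smul, add_smul]
      exact N.add_mem (hmul z hz b) (N.add_mem (hmul y hy c) (hmul z hz y))
    exact hbc (aux_extract N
      (by rwa [show (b + y) * (c + z) = b * c + (b * z + (c * y + y * z)) by ring] at h2) hs)
  have hby : ¬ IsUnit (b + y) := by
    intro hu
    have h2 : ((a + x) * (c + z)) • m ∈ N := aux_unit_cancel N hu
      (by rwa [show (a + x) * (c + z) * (b + y) = (a + x) * (b + y) * (c + z) by ring])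
    have hs : (a * z + (c * x + x * z)) • m ∈ N := by
      rw [add_smul, add_smul]
      exact N.add_mem (hmul z hz a) (N.add_mem (hmul x hx c) (hmul z hz x))
    exact hac (aux_extract N
      (by rwa [show (a + x) * (c + z) = a * c + (a * z + (c * x + x * z)) by ring] at h2) hs)
  have habmem : ((a + x) * (b + y)) • m ∈ N → (a * b) • m ∈ N := by
    intro h2
    have hs : (a * y + (b * x + x * y)) • m ∈ N := by
      rw [add_smul, add_smul]
      exact N.add_mem (hmul y hy a) (N.add_mem (hmul x hx b) (hmul y hy x))
    exact aux_extract N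
      (by rwa [show (a + x) * (b + y) = a * b + (a * y + (b * x + x * y)) by ring] at h2) hs
  have hcz : ¬ IsUnit (c + z) := fun hu => hab (habmem (aux_unit_cancel N hu hmemN))
  rcases hwk (a + x) (b + y) (c + z) m hax hby hcz hmemN hne with h | h
  · exact hab (habmem h)
  · exact hcm (aux_extract N h (hmem z hz))
end

section
/- Let N be a weakly classical 1-absorbing prime submodule of M and suppose there exists a classical 1-quadruple-zero (a, b, c, m) of N such that acm ∉ N and bcm ∉ N. Then (N :_R M)³N = 0, i.e., xyzn = 0 for all x, y, z ∈ (N :_R M) and all n ∈ N; in particular N is a nilpotent submodule of M. -/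
/-!
Whether `r • v` lies in `N` depends only on `r` modulo `(N :_R M)` and on `v` modulo `N`. So
for every `a' ≡ a`, `b' ≡ b`, `c' ≡ c` modulo `(N :_R M)` and `m' ≡ m` modulo `N`, the element
`a'b'c'm'` lies in `N` while `a'b'm'`, `c'm'`, `a'c'm'`, `b'c'm'` do not. None of `a', b', c'` can
then be a unit (it could be cancelled from `a'b'c'm' ∈ N`), and the weak absorbing property forces
`a'b'c'm' = 0`. Expanding `(a + x)(b + y)(c + z)(m + n) = 0` and cancelling the instances with
some perturbation set to zero leaves `xyzn = 0`.
-/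

namespace Submodule

variable {R M : Type*} [CommRing R] [AddCommGroup M] [Module R M] {N : Submodule R M}

theorem smul_mem_iff_of_sub_mem {r r' : R} {v v' : M} (hr : r' - r ∈ N.colon ⊤)
    (hv : v' - v ∈ N) : r' • v' ∈ N ↔ r • v ∈ N := by
  have hdiff : r' • v' - r • v ∈ N := by
    rw [show r' • v' - r • v = (r' - r) • v' + r • (v' - v) by module]
    exact N.add_mem (mem_colon.1 hr v' trivial) (N.smul_mem r hv)
  rw [← N.sub_mem_iff_left hdiff, sub_sub_cancel]

theorem pow_three_smul_eq_bot {I : Ideal R}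
    (h : ∀ x ∈ I, ∀ y ∈ I, ∀ z ∈ I, ∀ n ∈ N, (x * y * z) • n = 0) : I ^ 3 • N = ⊥ := by
  rw [← le_annihilator_iff, pow_three']
  calc I * I * I ≤ N.annihilator.colon I * I :=
        Ideal.mul_mono_left <| Ideal.mul_le.2 fun x hx y hy => mem_colon.2 fun z hz =>
          mem_annihilator.2 (h x hx y hy z hz)
    _ ≤ N.annihilator := Ideal.mul_le.2 fun r hr z hz => mem_colon.1 hr z hz

end Submodule

namespace IsWeaklyClassical1AbsorbingPrime

open Submodule

variable {R M : Type*} [CommRing R] [AddCommGroup M] [Module R M] {N : Submodule R M}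
  {a b c : R} {m : M}

theorem smul_eq_zero_of_sub_mem (hN : IsWeaklyClassical1AbsorbingPrime N)
    (hq : IsClassical1QuadrupleZero N a b c m) (hac : (a * c) • m ∉ N) (hbc : (b * c) • m ∉ N)
    {a' b' c' : R} {m' : M} (ha : a' - a ∈ N.colon ⊤) (hb : b' - b ∈ N.colon ⊤)
    (hc : c' - c ∈ N.colon ⊤) (hm : m' - m ∈ N) : (a' * b' * c') • m' = 0 := by
  obtain ⟨-, habsorb⟩ := hN
  obtain ⟨-, -, -, habcm, habm, hcm⟩ := hq
  have hab' : a' * b' - a * b ∈ N.colon ⊤ := Ideal.mul_sub_mul_mem _ ha hb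
  have hac' : a' * c' - a * c ∈ N.colon ⊤ := Ideal.mul_sub_mul_mem _ ha hc
  have hbc' : b' * c' - b * c ∈ N.colon ⊤ := Ideal.mul_sub_mul_mem _ hb hc
  have hmem : (a' * b' * c') • m' ∈ N :=
    (smul_mem_iff_of_sub_mem (Ideal.mul_sub_mul_mem _ hab' hc) hm).2 (habcm ▸ N.zero_mem)
  by_cases hua : IsUnit a'
  · rw [mul_assoc, mul_smul, N.smul_mem_iff_of_isUnit hua, smul_mem_iff_of_sub_mem hbc' hm] at hmem
    exact absurd hmem hbc
  by_cases hub : IsUnit b'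
  · rw [show a' * b' * c' = b' * (a' * c') by ring, mul_smul, N.smul_mem_iff_of_isUnit hub,
      smul_mem_iff_of_sub_mem hac' hm] at hmem
    exact absurd hmem hac
  by_cases huc : IsUnit c'
  · rw [show a' * b' * c' = c' * (a' * b') by ring, mul_smul, N.smul_mem_iff_of_isUnit huc,
      smul_mem_iff_of_sub_mem hab' hm] at hmem
    exact absurd hmem habm
  by_contra hne
  rcases habsorb a' b' c' m' hua hub huc hmem hne with h | h
  · exact habm ((smul_mem_iff_of_sub_mem hab' hm).1 h)
  · exact hcm ((smul_mem_iff_of_sub_mem hc hm).1 h)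

theorem mul_mul_smul_eq_zero (hN : IsWeaklyClassical1AbsorbingPrime N)
    (hq : IsClassical1QuadrupleZero N a b c m) (hac : (a * c) • m ∉ N) (hbc : (b * c) • m ∉ N)
    {x y z : R} (hx : x ∈ N.colon ⊤) (hy : y ∈ N.colon ⊤) (hz : z ∈ N.colon ⊤) {n : M}
    (hn : n ∈ N) : (x * y * z) • n = 0 := by
  set I := N.colon ⊤
  have H : ∀ x ∈ I, ∀ y ∈ I, ∀ z ∈ I, ∀ n ∈ N, ((a + x) * (b + y) * (c + z)) • (m + n) = 0 :=
    fun x hx y hy z hz n hn => hN.smul_eq_zero_of_sub_mem hq hac hbc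
      (by rwa [add_sub_cancel_left]) (by rwa [add_sub_cancel_left])
      (by rwa [add_sub_cancel_left]) (by rwa [add_sub_cancel_left])
  -- Subtracting the instance with one perturbation set to `0` strips one of `m, a, b, c`.
  have h₁ : ∀ x ∈ I, ∀ y ∈ I, ∀ z ∈ I, ((a + x) * (b + y) * (c + z)) • n = 0 :=
    fun x hx y hy z hz => by
      linear_combination (norm := module) H x hx y hy z hz n hn - H x hx y hy z hz 0 N.zero_mem
  have h₂ : ∀ y ∈ I, ∀ z ∈ I, (x * (b + y) * (c + z)) • n = 0 := fun y hy z hz => by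
    linear_combination (norm := module) h₁ x hx y hy z hz - h₁ 0 I.zero_mem y hy z hz
  have h₃ : ∀ z ∈ I, (x * y * (c + z)) • n = 0 := fun z hz => by
    linear_combination (norm := module) h₂ y hy z hz - h₂ 0 I.zero_mem z hz
  linear_combination (norm := module) h₃ z hz - h₃ 0 I.zero_mem

end IsWeaklyClassical1AbsorbingPrime

theorem stmt_15_general {R : Type*} [CommRing R] {M : Type*} [AddCommGroup M]
    [Module R M] (N : Submodule R M)
    (hN : IsWeaklyClassical1AbsorbingPrime N)
    (hquad : ∃ (a b c : R) (m : M), IsClassical1QuadrupleZero N a b c m ∧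
      (a * c) • m ∉ N ∧ (b * c) • m ∉ N) :
    (∀ x ∈ N.colon ⊤, ∀ y ∈ N.colon ⊤, ∀ z ∈ N.colon ⊤, ∀ n ∈ N, (x * y * z) • n = 0) ∧
      ∃ k : ℕ, 0 < k ∧ (N.colon ⊤) ^ k • N = ⊥ := by
  obtain ⟨a, b, c, m, hq, hac, hbc⟩ := hquad
  have hzero : ∀ x ∈ N.colon ⊤, ∀ y ∈ N.colon ⊤, ∀ z ∈ N.colon ⊤, ∀ n ∈ N, (x * y * z) • n = 0 :=
    fun _ hx _ hy _ hz _ hn => hN.mul_mul_smul_eq_zero hq hac hbc hx hy hz hn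
  exact ⟨hzero, 3, three_pos, Submodule.pow_three_smul_eq_bot hzero⟩

/-- If `N` is weakly classical 1-absorbing prime and there exists a
classical 1-quadruple-zero `(a, b, c, m)` of `N` with `acm ∉ N` and `bcm ∉ N`, then
`(N :_R M)³N = 0`; in particular `N` is a nilpotent submodule of `M`. -/
theorem stmt_15 {R : Type*} [CommRing R] [Nontrivial R] {M : Type*} [AddCommGroup M]
    [Module R M] [Nontrivial M] (N : Submodule R M)
    (hN : IsWeaklyClassical1AbsorbingPrime N)
    (hquad : ∃ (a b c : R) (m : M), IsClassical1QuadrupleZero N a b c m ∧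
      (a * c) • m ∉ N ∧ (b * c) • m ∉ N) :
    (∀ x ∈ N.colon ⊤, ∀ y ∈ N.colon ⊤, ∀ z ∈ N.colon ⊤, ∀ n ∈ N, (x * y * z) • n = 0) ∧
      ∃ k : ℕ, 0 < k ∧ (N.colon ⊤) ^ k • N = ⊥ :=
  stmt_15_general N hN hquad
end

section
/- Let M₁ and M₂ be R-modules and N₁ a proper submodule of M₁. Then N₁ × M₂ is a weakly classical 1-absorbing prime submodule of the R-module M₁ × M₂ if and only if N₁ is a weakly classical 1-absorbing prime submodule of M₁ and, for every classical 1-quadruple-zero (a, b, c, m) of N₁ with a, b, c nonunits of R and m ∈ M₁, one has abc ∈ Ann_R(M₂). -/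
/-!
Membership in `N₁ × M₂` only sees the first coordinate, so the absorbing condition for
`N₁ × M₂` at `(m, n)` is the one for `N₁` at `m`, except that the hypothesis `abc • (m, n) ≠ 0`
is weaker than `abc • m ≠ 0`. Testing at `(m, 0)` gives back the condition for `N₁`; the extra
cases, `abc • m = 0 ≠ abc • n`, are exactly those in which `(a, b, c, m)` is a classical
1-quadruple-zero of `N₁` that is not killed by `abc` on `M₂`.
-/

section

variable {R M M₁ M₂ : Type*} [CommRing R] [AddCommGroup M] [Module R M]
  [AddCommGroup M₁] [Module R M₁] [AddCommGroup M₂] [Module R M₂]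

theorem IsWeaklyClassical1AbsorbingPrime.or_isClassical1QuadrupleZero {N : Submodule R M}
    (hN : IsWeaklyClassical1AbsorbingPrime N) {a b c : R} {m : M} (ha : ¬ IsUnit a)
    (hb : ¬ IsUnit b) (hc : ¬ IsUnit c) (hm : (a * b * c) • m ∈ N) :
    (a * b) • m ∈ N ∨ c • m ∈ N ∨ IsClassical1QuadrupleZero N a b c m := by
  by_cases hzero : (a * b * c) • m = 0
  · by_cases hab : (a * b) • m ∈ N
    · exact .inl hab
    by_cases hcm : c • m ∈ N
    · exact .inr (.inl hcm)
    exact .inr (.inr ⟨ha, hb, hc, hzero, hab, hcm⟩)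
  · exact (hN.2 a b c m ha hb hc hm hzero).imp_right .inl

theorem IsWeaklyClassical1AbsorbingPrime.of_prod_top {N₁ : Submodule R M₁}
    (h : IsWeaklyClassical1AbsorbingPrime (N₁.prod (⊤ : Submodule R M₂))) :
    IsWeaklyClassical1AbsorbingPrime N₁ := by
  refine ⟨fun htop ↦ h.1 (by simp [htop]), fun a b c m ha hb hc hm hne ↦ ?_⟩
  simpa using h.2 a b c (m, 0) ha hb hc (by simpa using hm) (by simpa using hne)

theorem IsWeaklyClassical1AbsorbingPrime.smul_eq_zero_of_prod_top {N₁ : Submodule R M₁}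
    (h : IsWeaklyClassical1AbsorbingPrime (N₁.prod (⊤ : Submodule R M₂))) {a b c : R} {m : M₁}
    (hq : IsClassical1QuadrupleZero N₁ a b c m) (n : M₂) : (a * b * c) • n = 0 := by
  obtain ⟨ha, hb, hc, hzero, hab, hcm⟩ := hq
  by_contra hn
  have hmem : (a * b * c) • (m, n) ∈ N₁.prod (⊤ : Submodule R M₂) := by simp [hzero]
  have hne : (a * b * c) • (m, n) ≠ 0 := by simp [Prod.ext_iff, hn]
  rcases h.2 a b c (m, n) ha hb hc hmem hne with h' | h'
  · exact hab (by simpa using h')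
  · exact hcm (by simpa using h')

theorem IsWeaklyClassical1AbsorbingPrime.prod_top {N₁ : Submodule R M₁}
    (h : IsWeaklyClassical1AbsorbingPrime N₁)
    (hann : ∀ (a b c : R) (m : M₁), IsClassical1QuadrupleZero N₁ a b c m →
      ∀ n : M₂, (a * b * c) • n = 0) :
    IsWeaklyClassical1AbsorbingPrime (N₁.prod (⊤ : Submodule R M₂)) := by
  refine ⟨fun htop ↦ h.1 (Submodule.prod_eq_top_iff _ _ _ |>.mp htop).1, ?_⟩
  rintro a b c ⟨m, n⟩ ha hb hc hmem hne
  rcases h.or_isClassical1QuadrupleZero ha hb hc (by simpa using hmem) with hab | hcm | hq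
  · exact .inl (by simpa using hab)
  · exact .inr (by simpa using hcm)
  · exact absurd (by simp [Prod.ext_iff, hq.2.2.2.1, hann a b c m hq n]) hne

end

theorem stmt_16_general {R : Type*} [CommRing R] {M₁ M₂ : Type*} [AddCommGroup M₁]
    [Module R M₁] [AddCommGroup M₂] [Module R M₂]
    (N₁ : Submodule R M₁) :
    IsWeaklyClassical1AbsorbingPrime (N₁.prod (⊤ : Submodule R M₂)) ↔
      (IsWeaklyClassical1AbsorbingPrime N₁ ∧
        ∀ (a b c : R) (m : M₁), IsClassical1QuadrupleZero N₁ a b c m →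
          ∀ n : M₂, (a * b * c) • n = 0) :=
  ⟨fun h ↦ ⟨h.of_prod_top, fun _ _ _ _ hq ↦ h.smul_eq_zero_of_prod_top hq⟩,
    fun ⟨h, hann⟩ ↦ h.prod_top hann⟩

/-- `N₁ × M₂` is weakly classical 1-absorbing prime in `M₁ × M₂` iff `N₁`
is weakly classical 1-absorbing prime in `M₁` and every classical 1-quadruple-zero
`(a, b, c, m)` of `N₁` satisfies `abc ∈ Ann_R(M₂)`. -/
theorem stmt_16 {R : Type*} [CommRing R] [Nontrivial R] {M₁ M₂ : Type*} [AddCommGroup M₁]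
    [Module R M₁] [Nontrivial M₁] [AddCommGroup M₂] [Module R M₂] [Nontrivial M₂]
    (N₁ : Submodule R M₁) (hN₁ : N₁ ≠ ⊤) :
    IsWeaklyClassical1AbsorbingPrime (N₁.prod (⊤ : Submodule R M₂)) ↔
      (IsWeaklyClassical1AbsorbingPrime N₁ ∧
        ∀ (a b c : R) (m : M₁), IsClassical1QuadrupleZero N₁ a b c m →
          ∀ n : M₂, (a * b * c) • n = 0) :=
  stmt_16_general N₁
end

section
/- Let M₁ and M₂ be R-modules and let N₁, N₂ be proper submodules of M₁ and M₂ respectively. If N₁ × N₂ is a weakly classical 1-absorbing prime submodule of the R-module M₁ × M₂, then N₁ is a weakly classical 1-absorbing prime submodule of M₁ and N₂ is a weakly classical 1-absorbing prime submodule of M₂. -/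
theorem IsWeaklyClassical1AbsorbingPrime.comap_of_injective {R M M' : Type*} [CommRing R]
    [AddCommGroup M] [Module R M] [AddCommGroup M'] [Module R M'] {N : Submodule R M'}
    (hN : IsWeaklyClassical1AbsorbingPrime N) {f : M →ₗ[R] M'} (hf : Function.Injective f)
    (hproper : N.comap f ≠ ⊤) : IsWeaklyClassical1AbsorbingPrime (N.comap f) := by
  refine ⟨hproper, fun a b c m ha hb hc hmem hne => ?_⟩
  have hne' : (a * b * c) • f m ≠ 0 := by
    rwa [← map_smul, ← map_zero f, hf.ne_iff]
  simpa only [Submodule.mem_comap, map_smul] using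
    hN.2 a b c (f m) ha hb hc (by simpa only [Submodule.mem_comap, map_smul] using hmem) hne'

theorem stmt_17_general {R : Type*} [CommRing R] {M₁ M₂ : Type*} [AddCommGroup M₁]
    [Module R M₁] [AddCommGroup M₂] [Module R M₂]
    (N₁ : Submodule R M₁) (N₂ : Submodule R M₂) (hN₁ : N₁ ≠ ⊤) (hN₂ : N₂ ≠ ⊤)
    (h : IsWeaklyClassical1AbsorbingPrime (N₁.prod N₂)) :
    IsWeaklyClassical1AbsorbingPrime N₁ ∧ IsWeaklyClassical1AbsorbingPrime N₂ := by
  constructor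
  · rw [← Submodule.prod_comap_inl N₁ N₂] at hN₁ ⊢
    exact h.comap_of_injective LinearMap.inl_injective hN₁
  · rw [← Submodule.prod_comap_inr N₁ N₂] at hN₂ ⊢
    exact h.comap_of_injective LinearMap.inr_injective hN₂

/-- If `N₁ × N₂` is a weakly classical 1-absorbing prime submodule of
`M₁ × M₂`, then `N₁` and `N₂` are weakly classical 1-absorbing prime submodules of
`M₁` and `M₂` respectively. -/
theorem stmt_17 {R : Type*} [CommRing R] [Nontrivial R] {M₁ M₂ : Type*} [AddCommGroup M₁]
    [Module R M₁] [Nontrivial M₁] [AddCommGroup M₂] [Module R M₂] [Nontrivial M₂]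
    (N₁ : Submodule R M₁) (N₂ : Submodule R M₂) (hN₁ : N₁ ≠ ⊤) (hN₂ : N₂ ≠ ⊤)
    (h : IsWeaklyClassical1AbsorbingPrime (N₁.prod N₂)) :
    IsWeaklyClassical1AbsorbingPrime N₁ ∧ IsWeaklyClassical1AbsorbingPrime N₂ :=
  stmt_17_general N₁ N₂ hN₁ hN₂ h
end

section
/- Let M be a faithful R-module (i.e., Ann_R(M) = 0). If N is a weakly classical 1-absorbing prime submodule of M, then (N :_R M) is a weakly 1-absorbing prime ideal of R. -/
/-!
Suppose `abc ∈ (N : M)` and `abc ≠ 0` but `ab, c ∉ (N : M)`. As a group is not the union of two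
proper subgroups, faithfulness yields `m₁` with `abm₁ ∉ N`, `abcm₁ ≠ 0` (hence `cm₁ ∈ N`) and `m₂`
with `cm₂ ∉ N`, `abcm₂ ≠ 0` (hence `abm₂ ∈ N`). Applying the hypothesis to `m₂ + r m₁` and
`m₁ + r m₂` shows that `t := abcm₁ = -abcm₂` is fixed by every `r` with `r ab m₁ ∉ N` or
`r c m₂ ∉ N`; taking `r = 1 + c` and `r = 1 + ab` gives `(ab + c) t = 0`. So `z := ab + c` is a
nonunit, and the hypothesis for the triples `(a, b, z)` and `(a, b, ab)` at `m₁` forces `t = 0`.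
-/

namespace Submodule

variable {R M : Type*} [CommRing R] [AddCommGroup M] [Module R M] {N : Submodule R M}

theorem colon_univ_ne_top (hN : N ≠ ⊤) : N.colon Set.univ ≠ ⊤ := by
  rwa [Ne, colon_eq_top_iff_subset, Set.univ_subset_iff, coe_eq_univ]

theorem exists_smul_notMem_and_smul_ne_zero {r s : R} {m m' : M} (hm : r • m ∉ N)
    (hm' : s • m' ≠ 0) : ∃ n, r • n ∉ N ∧ s • n ≠ 0 := by
  by_cases hsm : s • m = 0
  · by_cases hrm' : r • m' ∈ N
    · refine ⟨m + m', fun h => hm ?_, by rwa [smul_add, hsm, zero_add]⟩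
      simpa using N.sub_mem h hrm'
    · exact ⟨m', hrm', hm'⟩
  · exact ⟨m, hm, hsm⟩

section

variable {x y : R} {m₁ m₂ : M}

/-- The element `m₂ + r • m₁` lies outside both `x⁻¹N` and `y⁻¹N`, so `x * y` kills it. -/
theorem smul_mul_smul_eq_neg {r : R} (hxy : ∀ m : M, x • m ∉ N → y • m ∉ N → (x * y) • m = 0)
    (hy₁ : y • m₁ ∈ N) (hx₂ : x • m₂ ∈ N) (hy₂ : y • m₂ ∉ N) (hr : r • x • m₁ ∉ N) :
    r • (x * y) • m₁ = -((x * y) • m₂) := by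
  have hx : x • (m₂ + r • m₁) ∉ N := fun h => hr <| by
    simpa [smul_add, smul_comm x r] using N.sub_mem h hx₂
  have hy : y • (m₂ + r • m₁) ∉ N := fun h => hy₂ <| by
    simpa [smul_add, smul_comm y r] using N.sub_mem h (N.smul_mem r hy₁)
  rw [eq_neg_iff_add_eq_zero, add_comm, ← hxy _ hx hy, smul_add, smul_comm r]

theorem smul_mul_smul_eq_self (hxy : ∀ m : M, x • m ∉ N → y • m ∉ N → (x * y) • m = 0)
    (hx₁ : x • m₁ ∉ N) (hy₁ : y • m₁ ∈ N) (hx₂ : x • m₂ ∈ N) (hy₂ : y • m₂ ∉ N) {r : R}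
    (hr : r • x • m₁ ∉ N ∨ r • y • m₂ ∉ N) : r • (x * y) • m₁ = (x * y) • m₁ := by
  have hyx : ∀ m : M, y • m ∉ N → x • m ∉ N → (y * x) • m = 0 := fun m h₁ h₂ => by
    rw [mul_comm]; exact hxy m h₂ h₁
  have hneg : (x * y) • m₁ = -((x * y) • m₂) := by
    simpa using smul_mul_smul_eq_neg hxy hy₁ hx₂ hy₂ (r := 1) (by rwa [one_smul])
  rcases hr with hr | hr
  · rw [smul_mul_smul_eq_neg hxy hy₁ hx₂ hy₂ hr, hneg]
  · have h := smul_mul_smul_eq_neg hyx hx₂ hy₁ hx₁ hr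
    rw [mul_comm y] at h
    rw [hneg, smul_neg, h, neg_neg, ← hneg]

theorem add_smul_mul_smul_eq_zero (hxy : ∀ m : M, x • m ∉ N → y • m ∉ N → (x * y) • m = 0)
    (hx₁ : x • m₁ ∉ N) (hy₁ : y • m₁ ∈ N) (hx₂ : x • m₂ ∈ N) (hy₂ : y • m₂ ∉ N)
    (hxy₁ : (x * y) • m₁ ∈ N) (hxy₂ : (x * y) • m₂ ∈ N) : (x + y) • (x * y) • m₁ = 0 := by
  have hy : y • (x * y) • m₁ = 0 := by
    have h := smul_mul_smul_eq_self hxy hx₁ hy₁ hx₂ hy₂ (r := 1 + y) <| .inl fun h => hx₁ <| by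
      convert N.sub_mem h hxy₁ using 1; module
    rwa [add_smul, one_smul, add_eq_left] at h
  have hx : x • (x * y) • m₁ = 0 := by
    have h := smul_mul_smul_eq_self hxy hx₁ hy₁ hx₂ hy₂ (r := 1 + x) <| .inr fun h => hy₂ <| by
      convert N.sub_mem h hxy₂ using 1; module
    rwa [add_smul, one_smul, add_eq_left] at h
  rw [add_smul, hx, hy, add_zero]

end

end Submodule

open Submodule

theorem IsWeaklyClassical1AbsorbingPrime.false_of_witnesses {R M : Type*} [CommRing R]
    [AddCommGroup M] [Module R M] {N : Submodule R M} (hN : IsWeaklyClassical1AbsorbingPrime N)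
    {a b c : R} (ha : ¬IsUnit a) (hb : ¬IsUnit b) (hc : ¬IsUnit c)
    (habc : ∀ m : M, (a * b * c) • m ∈ N) {m₁ m₂ : M} (hab₁ : (a * b) • m₁ ∉ N)
    (ht : (a * b * c) • m₁ ≠ 0) (hc₂ : c • m₂ ∉ N) (hs : (a * b * c) • m₂ ≠ 0) : False := by
  have habc_zero : ∀ m : M, (a * b) • m ∉ N → c • m ∉ N → (a * b * c) • m = 0 := fun m h₁ h₂ => by
    by_contra h
    exact (hN.2 a b c m ha hb hc (habc m) h).elim h₁ h₂
  have hc₁ : c • m₁ ∈ N := (hN.2 a b c m₁ ha hb hc (habc m₁) ht).resolve_left hab₁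
  have hab₂ : (a * b) • m₂ ∈ N := (hN.2 a b c m₂ ha hb hc (habc m₂) hs).resolve_right hc₂
  have hr_zero : ∀ r : R, ¬IsUnit r → r • (a * b) • m₁ ∈ N → r • m₁ ∉ N → r • (a * b) • m₁ = 0 :=
    fun r hr hmem hr₁ => by
      by_contra h
      rw [smul_comm, ← mul_smul] at hmem h
      exact (hN.2 a b r m₁ ha hb hr hmem h).elim hab₁ hr₁
  have hzt : (a * b + c) • (a * b * c) • m₁ = 0 :=
    add_smul_mul_smul_eq_zero habc_zero hab₁ hc₁ hab₂ hc₂ (habc m₁) (habc m₂)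
  have hz : ¬IsUnit (a * b + c) := fun hu => ht ((hu.smul_eq_zero).mp hzt)
  have hzu : (a * b + c) • (a * b) • m₁ ∈ N := by
    by_contra h
    exact ht (hzt ▸ (smul_mul_smul_eq_self habc_zero hab₁ hc₁ hab₂ hc₂ (.inl h)).symm)
  have hzm₁ : (a * b + c) • m₁ ∉ N := fun h => hab₁ <| by
    convert N.sub_mem h hc₁ using 1; module
  have habu : (a * b) • (a * b) • m₁ = -((a * b * c) • m₁) := by
    rw [eq_neg_iff_add_eq_zero, ← hr_zero _ hz hzu hzm₁]; module
  have hab : ¬IsUnit (a * b) := fun h => ha (isUnit_of_mul_isUnit_left h)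
  exact ht <| neg_eq_zero.mp <| habu ▸ hr_zero (a * b) hab (habu ▸ N.neg_mem (habc m₁)) hab₁

theorem stmt_18_general {R : Type*} [CommRing R] {M : Type*} [AddCommGroup M]
    [Module R M] (hfaith : ∀ x : R, (∀ m : M, x • m = 0) → x = 0)
    (N : Submodule R M) (hN : IsWeaklyClassical1AbsorbingPrime N) :
    IsWeakly1AbsorbingPrimeIdeal (N.colon ⊤) := by
  refine ⟨colon_univ_ne_top hN.1, fun a b c ha hb hc habc hne => ?_⟩
  by_contra! h
  simp only [Set.top_eq_univ, mem_colon, Set.mem_univ, true_implies, not_forall] at habc h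
  obtain ⟨⟨m, hm⟩, ⟨m', hm'⟩⟩ := h
  obtain ⟨m₀, hm₀⟩ : ∃ m : M, (a * b * c) • m ≠ 0 := not_forall.mp (hne ∘ hfaith _)
  obtain ⟨m₁, hab₁, ht⟩ := exists_smul_notMem_and_smul_ne_zero hm hm₀
  obtain ⟨m₂, hc₂, hs⟩ := exists_smul_notMem_and_smul_ne_zero hm' hm₀
  exact hN.false_of_witnesses ha hb hc habc hab₁ ht hc₂ hs

/-- If `M` is a faithful `R`-module and `N` is a weakly classical
1-absorbing prime submodule of `M`, then `(N :_R M)` is a weakly 1-absorbing prime ideal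
of `R`. -/
theorem stmt_18 {R : Type*} [CommRing R] [Nontrivial R] {M : Type*} [AddCommGroup M]
    [Module R M] [Nontrivial M] (hfaith : ∀ x : R, (∀ m : M, x • m = 0) → x = 0)
    (N : Submodule R M) (hN : IsWeaklyClassical1AbsorbingPrime N) :
    IsWeakly1AbsorbingPrimeIdeal (N.colon ⊤) :=
  stmt_18_general hfaith N hN
end

section
/- (1) If every proper submodule of M is a weakly classical 1-absorbing prime submodule, then Jac(R)³M = 0, i.e., xyzm = 0 for all x, y, z in the Jacobson radical Jac(R) of R and all m ∈ M. (2) If moreover (R, 𝔪) is a local ring, then every proper submodule of M is a weakly classical 1-absorbing prime submodule if and only if 𝔪³M = 0. -/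
/-!
If `xyz • m ≠ 0` for `x, y, z` in the Jacobson radical, apply the hypothesis to the cyclic
submodule `N = R ∙ xyz • m`. Each of the three outcomes (`N = M`, `xy • m ∈ N`, `z • m ∈ N`)
puts some `v ≠ 0` in `R ∙ j • v` with `j` in the Jacobson radical, which the cyclic case of
Nakayama's lemma forbids. Over a local ring every nonunit lies in `𝔪`, so `𝔪³M = 0` makes the
condition `abcm ≠ 0` in the definition impossible to meet.
-/

section

variable {R : Type*} [CommRing R] {M : Type*} [AddCommGroup M] [Module R M]

theorem Ideal.not_isUnit_of_mem_jacobson_bot [Nontrivial R] {x : R}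
    (hx : x ∈ (⊥ : Ideal R).jacobson) : ¬IsUnit x := fun hu =>
  Ideal.jacobson_eq_top_iff.not.mpr bot_ne_top (Ideal.eq_top_of_isUnit_mem _ hx hu)

theorem eq_zero_of_mem_span_singleton_smul_of_mem_jacobson {j : R}
    (hj : j ∈ (⊥ : Ideal R).jacobson) {v : M} (hv : v ∈ R ∙ (j • v)) : v = 0 := by
  obtain ⟨r, hr⟩ := Submodule.mem_span_singleton.mp hv
  have hunit : IsUnit (j * -r + 1) := Ideal.mem_jacobson_bot.mp hj (-r)
  have hkill : (j * -r + 1) • v = (j * -r + 1) • 0 := by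
    rw [add_smul, one_smul, mul_neg, neg_smul, mul_comm, mul_smul, hr, neg_add_cancel, smul_zero]
  exact hunit.smul_left_cancel.mp hkill

theorem mul_mul_smul_eq_zero_of_forall_isWeaklyClassical1AbsorbingPrime [Nontrivial R]
    (h : ∀ N : Submodule R M, N ≠ ⊤ → IsWeaklyClassical1AbsorbingPrime N) {x y z : R}
    (hx : x ∈ (⊥ : Ideal R).jacobson) (hy : y ∈ (⊥ : Ideal R).jacobson)
    (hz : z ∈ (⊥ : Ideal R).jacobson) (m : M) : (x * y * z) • m = 0 := by
  by_contra hne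
  have hxy : x * y ∈ (⊥ : Ideal R).jacobson := Ideal.mul_mem_right _ _ hx
  have hN : R ∙ ((x * y * z) • m) ≠ ⊤ := fun htop => hne <| by
    have hm : m ∈ R ∙ ((x * y * z) • m) := htop ▸ Submodule.mem_top
    rw [eq_zero_of_mem_span_singleton_smul_of_mem_jacobson (Ideal.mul_mem_right _ _ hxy) hm,
      smul_zero]
  rcases (h _ hN).2 x y z m (Ideal.not_isUnit_of_mem_jacobson_bot hx)
    (Ideal.not_isUnit_of_mem_jacobson_bot hy) (Ideal.not_isUnit_of_mem_jacobson_bot hz)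
    (Submodule.mem_span_singleton_self _) hne with hxym | hzm
  · rw [mul_comm (x * y), mul_smul] at hxym hne
    rw [eq_zero_of_mem_span_singleton_smul_of_mem_jacobson hz hxym, smul_zero] at hne
    exact hne rfl
  · rw [mul_smul] at hzm hne
    rw [eq_zero_of_mem_span_singleton_smul_of_mem_jacobson hxy hzm, smul_zero] at hne
    exact hne rfl

theorem isWeaklyClassical1AbsorbingPrime_of_forall_mul_mul_smul_eq_zero
    (h : ∀ a b c : R, ¬IsUnit a → ¬IsUnit b → ¬IsUnit c → ∀ m : M, (a * b * c) • m = 0)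
    {N : Submodule R M} (hN : N ≠ ⊤) : IsWeaklyClassical1AbsorbingPrime N :=
  ⟨hN, fun a b c m ha hb hc _ hne => absurd (h a b c ha hb hc m) hne⟩

end

theorem stmt_19_general {R : Type*} [CommRing R] [Nontrivial R] {M : Type*} [AddCommGroup M]
    [Module R M] :
    ((∀ N : Submodule R M, N ≠ ⊤ → IsWeaklyClassical1AbsorbingPrime N) →
      ∀ x ∈ (⊥ : Ideal R).jacobson, ∀ y ∈ (⊥ : Ideal R).jacobson,
        ∀ z ∈ (⊥ : Ideal R).jacobson, ∀ m : M, (x * y * z) • m = 0) ∧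
    (∀ _ : IsLocalRing R,
      ((∀ N : Submodule R M, N ≠ ⊤ → IsWeaklyClassical1AbsorbingPrime N) ↔
        ∀ x ∈ IsLocalRing.maximalIdeal R, ∀ y ∈ IsLocalRing.maximalIdeal R,
          ∀ z ∈ IsLocalRing.maximalIdeal R, ∀ m : M, (x * y * z) • m = 0)) := by
  refine ⟨fun h x hx y hy z hz => mul_mul_smul_eq_zero_of_forall_isWeaklyClassical1AbsorbingPrime
    h hx hy hz, fun _ => ?_⟩
  have hjac : (⊥ : Ideal R).jacobson = IsLocalRing.maximalIdeal R :=
    IsLocalRing.jacobson_eq_maximalIdeal ⊥ bot_ne_top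
  refine ⟨fun h x hx y hy z hz => ?_, fun h N hN => ?_⟩
  · rw [← hjac] at hx hy hz
    exact mul_mul_smul_eq_zero_of_forall_isWeaklyClassical1AbsorbingPrime h hx hy hz
  · refine isWeaklyClassical1AbsorbingPrime_of_forall_mul_mul_smul_eq_zero
      (fun a b c ha hb hc => ?_) hN
    exact h a ((IsLocalRing.mem_maximalIdeal a).mpr ha) b ((IsLocalRing.mem_maximalIdeal b).mpr hb)
      c ((IsLocalRing.mem_maximalIdeal c).mpr hc)

/-- (1) If every proper submodule of `M` is weakly classical 1-absorbing
prime, then `Jac(R)³M = 0`. (2) If `R` is local with maximal ideal `𝔪`, then every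
proper submodule of `M` is weakly classical 1-absorbing prime iff `𝔪³M = 0`. -/
theorem stmt_19 {R : Type*} [CommRing R] [Nontrivial R] {M : Type*} [AddCommGroup M]
    [Module R M] [Nontrivial M] :
    ((∀ N : Submodule R M, N ≠ ⊤ → IsWeaklyClassical1AbsorbingPrime N) →
      ∀ x ∈ (⊥ : Ideal R).jacobson, ∀ y ∈ (⊥ : Ideal R).jacobson,
        ∀ z ∈ (⊥ : Ideal R).jacobson, ∀ m : M, (x * y * z) • m = 0) ∧
    (∀ _ : IsLocalRing R,
      ((∀ N : Submodule R M, N ≠ ⊤ → IsWeaklyClassical1AbsorbingPrime N) ↔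
        ∀ x ∈ IsLocalRing.maximalIdeal R, ∀ y ∈ IsLocalRing.maximalIdeal R,
          ∀ z ∈ IsLocalRing.maximalIdeal R, ∀ m : M, (x * y * z) • m = 0)) :=
  stmt_19_general
end
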